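/- arXiv:2006.03029 — 6 statements merged into one kernel-verified Lean document; each statement's English description precedes it below -/
import Mathlib

section
/- Let p be a prime, let m ≥ 3, and let S = ℤ[x₁,…,x_{2m}, y₁,…,y_{2m}] be a polynomial ring over ℤ (e.g. MvPolynomial over a 4m-element index type). Set f_x := Σ_{i=1}^m x_i·x_{m+i} and f_y := Σ_{i=1}^m y_i·y_{m+i}, and let Λ_p : S → S be the ℤ-algebra endomorphism determined by Λ_p(x_j) = x_j^p and Λ_p(y_j) = x_j^p + (y_j − x_j)^p for 1 ≤ j ≤ 2m. Then for every G ∈ S with p·G = Λ_p(f_y − f_x) − (f_y − f_x)^p and every natural number k, the element G·∏_{j=1}^{2m}(y_j − x_j)^k does NOT belong to the ideal of S generated by p, f_x, f_y, and (y_j − x_j)^{p+k} for 1 ≤ j ≤ 2m. (This is the statement that the Frobenius trace on R/pR, for R = ℤ[x₁,…,x_{2m}]/(Σ x_i x_{m+i}), does not lift to a differential operator on R/p²R.) -/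
open MvPolynomial Finset

namespace Stmt0Aux

/-- Kill lemma: a coefficient vanishes if the polynomial is divisible by a too-large power
of a variable. -/
theorem coeff_eq_zero_of_xpow_dvd {ι R : Type*} [CommSemiring R] (M : ι →₀ ℕ) (v : ι)
    (c : ℕ) (f : MvPolynomial ι R) (hdvd : X v ^ c ∣ f) (h : M v < c) :
    coeff M f = 0 := by
  obtain ⟨g, rfl⟩ := hdvd
  rw [X_pow_eq_monomial, coeff_monomial_mul']
  rw [if_neg]
  rw [Finsupp.single_le_iff]
  omega

/-- The target monomial exponent. -/
noncomputable def Mexp (p m k : ℕ) : (Fin m ⊕ (Fin m ⊕ Fin m)) →₀ ℕ :=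
  Finsupp.equivFunOnFinite.symm
    (Sum.elim (fun _ => p - 1) (Sum.elim (fun _ => k) (fun _ => p - 1 + k)))

@[simp] theorem Mexp_inl (i : Fin m) : Mexp p m k (Sum.inl i) = p - 1 := rfl
@[simp] theorem Mexp_inr_inl (i : Fin m) : Mexp p m k (Sum.inr (Sum.inl i)) = k := rfl
@[simp] theorem Mexp_inr_inr (i : Fin m) : Mexp p m k (Sum.inr (Sum.inr i)) = p - 1 + k := rfl

/-- `w i = S_i * z'_i`. -/
noncomputable def w (m : ℕ) (i : Fin m) : MvPolynomial (Fin m ⊕ (Fin m ⊕ Fin m)) ℤ :=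
  X (Sum.inl i) * X (Sum.inr (Sum.inr i))

noncomputable def q (m : ℕ) : MvPolynomial (Fin m ⊕ (Fin m ⊕ Fin m)) ℤ := ∑ i : Fin m, w m i

noncomputable def PZ (m k : ℕ) : MvPolynomial (Fin m ⊕ (Fin m ⊕ Fin m)) ℤ :=
  ∏ j : Fin m ⊕ Fin m, X (Sum.inr j) ^ k

/-- Exponents of the auxiliary monomial factor of the witness. -/
def rEx (p : ℕ) {m : ℕ} (i : Fin m) : ℕ :=
  if i.val ≤ 1 then 0 else if i.val = 2 then p - 2 else p - 1

noncomputable def Wpoly (p m : ℕ) : MvPolynomial (Fin m ⊕ (Fin m ⊕ Fin m)) ℤ :=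
  q m ^ (p - 1) * ∏ i : Fin m, w m i ^ rEx p i

/-- The generalized exponent Finsupp for a balanced `w`-monomial times `PZ`. -/
noncomputable def Eexp (m k : ℕ) (e : Fin m → ℕ) : (Fin m ⊕ (Fin m ⊕ Fin m)) →₀ ℕ :=
  Finsupp.equivFunOnFinite.symm
    (Sum.elim e (Sum.elim (fun _ => k) (fun i => e i + k)))

theorem prod_w_pow_mul_PZ (e : Fin m → ℕ) :
    (∏ i : Fin m, w m i ^ e i) * PZ m k = monomial (Eexp m k e) 1 := by
  rw [monomial_eq, C_1, one_mul, Finsupp.prod_fintype _ _ (fun v => pow_zero _)]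
  rw [Fintype.prod_sum_type]
  unfold PZ w
  rw [Fintype.prod_sum_type]
  simp only [Eexp, Finsupp.coe_equivFunOnFinite_symm, Sum.elim_inl, Sum.elim_inr]
  simp only [mul_pow, pow_add, Finset.prod_mul_distrib]
  rw [Fintype.prod_sum_type]
  simp only [Sum.elim_inl, Sum.elim_inr]
  simp only [pow_add, Finset.prod_mul_distrib]
  ring

theorem coeff_prod_w_pow_mul_PZ (e : Fin m → ℕ) :
    coeff (Mexp p m k) ((∏ i : Fin m, w m i ^ e i) * PZ m k) =
      if ∀ i, e i = p - 1 then 1 else 0 := by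
  rw [prod_w_pow_mul_PZ, coeff_monomial]
  congr 1
  simp only [eq_iff_iff]
  constructor
  · intro h i
    have := DFunLike.congr_fun h (Sum.inl i)
    simpa [Eexp] using this
  · intro h
    unfold Eexp Mexp
    congr 1
    funext v
    rcases v with i | j
    · simp [h]
    · rcases j with i | i <;> simp [h]

end Stmt0Aux

namespace Stmt0Aux

variable {p m k : ℕ}

theorem coeff_killer (hp : 0 < p) (i : Fin m) (g : MvPolynomial (Fin m ⊕ (Fin m ⊕ Fin m)) ℤ) :
    coeff (Mexp p m k)
      (((X (Sum.inl i) - X (Sum.inr (Sum.inl i))) ^ p + X (Sum.inr (Sum.inl i)) ^ p) *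
        (PZ m k * g)) = 0 := by
  have hPZ : PZ m k = X (Sum.inr (Sum.inl i) : Fin m ⊕ (Fin m ⊕ Fin m)) ^ k *
      ∏ j ∈ Finset.univ.erase (Sum.inl i), (X (Sum.inr j) :
        MvPolynomial (Fin m ⊕ (Fin m ⊕ Fin m)) ℤ) ^ k :=
    (Finset.mul_prod_erase _ _ (Finset.mem_univ _)).symm
  rw [add_mul, coeff_add]
  have h2 : coeff (Mexp p m k) (X (Sum.inr (Sum.inl i)) ^ p * (PZ m k * g)) = 0 := by
    apply coeff_eq_zero_of_xpow_dvd _ (Sum.inr (Sum.inl i)) (p + k)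
    · exact ⟨(∏ j ∈ Finset.univ.erase (Sum.inl i), (X (Sum.inr j) :
        MvPolynomial (Fin m ⊕ (Fin m ⊕ Fin m)) ℤ) ^ k) * g, by rw [hPZ, pow_add]; ring⟩
    · simp only [Mexp_inr_inl]; omega
  rw [h2, add_zero, sub_eq_add_neg, add_pow, Finset.sum_mul, coeff_sum]
  apply Finset.sum_eq_zero
  intro t ht
  by_cases htp : t = p
  · subst htp
    apply coeff_eq_zero_of_xpow_dvd _ (Sum.inl i) t
    · exact ⟨(-X (Sum.inr (Sum.inl i))) ^ (t - t) * ((t.choose t : ℤ) : MvPolynomial _ ℤ) *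
        (PZ m k * g), by push_cast; ring⟩
    · simp only [Mexp_inl]; omega
  · have htlt : t < p := by simp only [Finset.mem_range] at ht; omega
    apply coeff_eq_zero_of_xpow_dvd _ (Sum.inr (Sum.inl i)) (k + 1)
    · refine dvd_trans (pow_dvd_pow _ (show k + 1 ≤ (p - t) + k by omega)) ?_
      refine ⟨X (Sum.inl i) ^ t * (-1) ^ (p - t) * ((p.choose t : ℤ) : MvPolynomial _ ℤ) *
        ((∏ j ∈ Finset.univ.erase (Sum.inl i), (X (Sum.inr j) :
          MvPolynomial (Fin m ⊕ (Fin m ⊕ Fin m)) ℤ) ^ k) * g), ?_⟩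
      rw [hPZ, neg_pow, pow_add]
      push_cast
      ring
    · simp only [Mexp_inr_inl]; omega

theorem dvd_coeff_mul_q_mul_W (hp : p.Prime) (r : MvPolynomial (Fin m ⊕ (Fin m ⊕ Fin m)) ℤ) :
    (p : ℤ) ∣ coeff (Mexp p m k) (r * q m * Wpoly p m) := by
  haveI : Fact p.Prime := ⟨hp⟩
  have hq1 : q m * q m ^ (p - 1) = q m ^ p := by
    rw [← pow_succ', show p - 1 + 1 = p by have := hp.pos; omega]
  have h1 : r * q m * Wpoly p m = r * (q m ^ p * ∏ i : Fin m, w m i ^ rEx p i) := by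
    rw [Wpoly, ← hq1]; ring
  rw [h1, ← ZMod.intCast_zmod_eq_zero_iff_dvd]
  have h2 : ((coeff (Mexp p m k) (r * (q m ^ p * ∏ i : Fin m, w m i ^ rEx p i)) : ℤ) :
      ZMod p) = coeff (Mexp p m k) (map (Int.castRingHom (ZMod p))
        (r * (q m ^ p * ∏ i : Fin m, w m i ^ rEx p i))) := by
    rw [coeff_map]; rfl
  rw [h2]
  rw [map_mul, map_mul, map_pow, map_prod]
  have hqm : map (Int.castRingHom (ZMod p)) (q m) =
      ∑ i : Fin m, X (Sum.inl i) * X (Sum.inr (Sum.inr i)) := by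
    rw [q, map_sum]
    refine Finset.sum_congr rfl fun i _ => ?_
    rw [w, map_mul, map_X, map_X]
  rw [hqm, sum_pow_char, Finset.sum_mul, Finset.mul_sum, coeff_sum]
  apply Finset.sum_eq_zero
  intro i _
  apply coeff_eq_zero_of_xpow_dvd _ (Sum.inl i) p
  · exact ⟨MvPolynomial.map (Int.castRingHom (ZMod p)) r * (X (Sum.inr (Sum.inr i)) ^ p *
      ∏ i : Fin m, MvPolynomial.map (Int.castRingHom (ZMod p)) (w m i ^ rEx p i)),
      by rw [mul_pow]; ring⟩
  · simp only [Mexp_inl]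
    have := hp.pos
    omega

end Stmt0Aux

namespace Stmt0Aux

variable {p m k : ℕ}

theorem rEx_le (hp : p.Prime) (i : Fin m) : rEx p i ≤ p - 1 := by
  unfold rEx; have := hp.two_le; split_ifs <;> omega

/-- The target exponent function for the multinomial expansion. -/
def dtar (p : ℕ) {m : ℕ} (i : Fin m) : ℕ := p - 1 - rEx p i

theorem dtar_eq (hp : p.Prime) (i : Fin m) :
    dtar p i = if i.val ≤ 1 then p - 1 else if i.val = 2 then 1 else 0 := by
  unfold dtar rEx; have := hp.two_le; split_ifs <;> omega

theorem dtar_sum (hp : p.Prime) (hm : 3 ≤ m) :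
    ∑ i : Fin m, dtar p i = 2 * p - 1 := by
  have h1 : ∑ i : Fin m, dtar p i =
      ∑ n ∈ Finset.range m, (if n ≤ 1 then p - 1 else if n = 2 then 1 else 0) := by
    rw [← Fin.sum_univ_eq_sum_range]
    exact Finset.sum_congr rfl fun i _ => dtar_eq hp i
  rw [h1, ← Finset.sum_range_add_sum_Ico _ hm]
  have h2 : ∑ n ∈ Finset.Ico 3 m, (if n ≤ 1 then p - 1 else if n = 2 then 1 else 0) = 0 := by
    apply Finset.sum_eq_zero
    intro n hn
    rw [Finset.mem_Ico] at hn
    split_ifs <;> omega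
  rw [h2, add_zero]
  have := hp.two_le
  simp [Finset.sum_range_succ]
  omega

theorem dtar_prod_factorial (hp : p.Prime) (hm : 3 ≤ m) :
    ∏ i : Fin m, (dtar p i).factorial = ((p - 1).factorial) ^ 2 := by
  have h1 : ∏ i : Fin m, (dtar p i).factorial =
      ∏ n ∈ Finset.range m,
        (Nat.factorial (if n ≤ 1 then p - 1 else if n = 2 then 1 else 0)) := by
    rw [← Fin.prod_univ_eq_prod_range]
    exact Finset.prod_congr rfl fun i _ => by rw [dtar_eq hp]
  rw [h1, ← Finset.prod_range_mul_prod_Ico _ hm]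
  have h2 : ∏ n ∈ Finset.Ico 3 m,
      (Nat.factorial (if n ≤ 1 then p - 1 else if n = 2 then 1 else 0)) = 1 := by
    apply Finset.prod_eq_one
    intro n hn
    rw [Finset.mem_Ico] at hn
    have hn3 : ¬ (n ≤ 1) := by omega
    have hn2 : ¬ (n = 2) := by omega
    rw [if_neg hn3, if_neg hn2]
    exact Nat.factorial_zero
  rw [h2, mul_one]
  simp [Finset.prod_range_succ, Nat.factorial_one]
  ring

theorem dtar_multinomial (hp : p.Prime) (hm : 3 ≤ m) :
    Nat.multinomial Finset.univ (dtar p (m := m)) =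
      p * Nat.choose (2 * p - 1) (p - 1) := by
  have hspec := Nat.multinomial_spec Finset.univ (dtar p (m := m))
  rw [dtar_prod_factorial hp hm, dtar_sum hp hm] at hspec
  have hch := Nat.choose_mul_factorial_mul_factorial
    (show p - 1 ≤ 2 * p - 1 by have := hp.two_le; omega)
  have h2 : 2 * p - 1 - (p - 1) = p := by have := hp.two_le; omega
  rw [h2] at hch
  have hfp : Nat.factorial p = p * Nat.factorial (p - 1) := by
    conv_lhs => rw [show p = (p - 1) + 1 by have := hp.two_le; omega]
    rw [Nat.factorial_succ, show p - 1 + 1 = p by have := hp.two_le; omega]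
  apply Nat.eq_of_mul_eq_mul_left (show 0 < ((p - 1).factorial) ^ 2 by positivity)
  rw [hspec, ← hch, hfp]
  ring

theorem lucas_not_dvd (hp : p.Prime) : ¬ (p ∣ Nat.choose (2 * p - 1) (p - 1)) := by
  haveI : Fact p.Prime := ⟨hp⟩
  have h := Choose.choose_modEq_choose_mod_mul_choose_div_nat (p := p)
    (n := 2 * p - 1) (k := p - 1)
  have e1 : (2 * p - 1) % p = p - 1 := by
    rw [show 2 * p - 1 = (p - 1) + p by have := hp.two_le; omega, Nat.add_mod_right]
    exact Nat.mod_eq_of_lt (by have := hp.two_le; omega)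
  have e2 : (2 * p - 1) / p = 1 := by
    rw [show 2 * p - 1 = (p - 1) + p by have := hp.two_le; omega,
      Nat.add_div_right _ hp.pos, Nat.div_eq_of_lt (by have := hp.two_le; omega)]
  have e3 : (p - 1) % p = p - 1 := Nat.mod_eq_of_lt (by have := hp.two_le; omega)
  have e4 : (p - 1) / p = 0 := Nat.div_eq_of_lt (by have := hp.two_le; omega)
  rw [e1, e2, e3, e4, Nat.choose_self, Nat.choose_zero_right, mul_one] at h
  intro hdvd
  have h0 : Nat.choose (2 * p - 1) (p - 1) % p = 0 :=
    Nat.dvd_iff_mod_eq_zero.mp hdvd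
  unfold Nat.ModEq at h
  rw [h0, Nat.mod_eq_of_lt hp.one_lt] at h
  omega

end Stmt0Aux

namespace Stmt0Aux

variable {p m k : ℕ}

theorem coeff_natCast_mul (n : ℕ) (f : MvPolynomial (Fin m ⊕ (Fin m ⊕ Fin m)) ℤ)
    (d : (Fin m ⊕ (Fin m ⊕ Fin m)) →₀ ℕ) :
    coeff d ((n : MvPolynomial (Fin m ⊕ (Fin m ⊕ Fin m)) ℤ) * f) = n * coeff d f := by
  rw [← map_natCast (C : ℤ →+* MvPolynomial (Fin m ⊕ (Fin m ⊕ Fin m)) ℤ) n, coeff_C_mul]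

theorem coeff_q_pow_main (hp : p.Prime) (hm : 3 ≤ m) :
    coeff (Mexp p m k) (q m ^ p * PZ m k * Wpoly p m) =
      ((p * Nat.choose (2 * p - 1) (p - 1) : ℕ) : ℤ) := by
  have h0 : q m ^ p * PZ m k * Wpoly p m =
      q m ^ (2 * p - 1) * ((∏ i : Fin m, w m i ^ rEx p i) * PZ m k) := by
    rw [Wpoly, show 2 * p - 1 = p + (p - 1) by have := hp.two_le; omega, pow_add]
    ring
  rw [h0]
  rw [q, Finset.sum_pow_eq_sum_piAntidiag, Finset.sum_mul, coeff_sum]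
  have hterm : ∀ d ∈ Finset.piAntidiag Finset.univ (2 * p - 1),
      coeff (Mexp p m k) ((Nat.multinomial Finset.univ d : MvPolynomial _ ℤ) *
          (∏ i : Fin m, w m i ^ d i) * ((∏ i : Fin m, w m i ^ rEx p i) * PZ m k)) =
        if d = dtar p (m := m) then (Nat.multinomial Finset.univ d : ℤ) else 0 := by
    intro d _
    have he : (Nat.multinomial Finset.univ d : MvPolynomial _ ℤ) *
          (∏ i : Fin m, w m i ^ d i) * ((∏ i : Fin m, w m i ^ rEx p i) * PZ m k) =
        (Nat.multinomial Finset.univ d : MvPolynomial _ ℤ) *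
          ((∏ i : Fin m, w m i ^ (d i + rEx p i)) * PZ m k) := by
      simp_rw [pow_add, Finset.prod_mul_distrib]
      ring
    rw [he, coeff_natCast_mul, coeff_prod_w_pow_mul_PZ]
    have hcond : (∀ i, d i + rEx p i = p - 1) ↔ d = dtar p (m := m) := by
      constructor
      · intro h
        funext i
        have := rEx_le hp i
        have := h i
        unfold dtar
        omega
      · intro h
        subst h
        intro i
        have := rEx_le hp i
        unfold dtar
        omega
    rw [if_congr hcond rfl rfl, mul_ite, mul_one, mul_zero]
  rw [Finset.sum_congr rfl hterm, Finset.sum_ite_eq' (Finset.piAntidiag Finset.univ (2 * p - 1))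
    (dtar p (m := m)) (fun d => (Nat.multinomial Finset.univ d : ℤ))]
  have hmem : dtar p (m := m) ∈ Finset.piAntidiag (Finset.univ : Finset (Fin m)) (2 * p - 1) := by
    rw [Finset.mem_piAntidiag]
    exact ⟨dtar_sum hp hm, fun i _ => Finset.mem_univ i⟩
  rw [if_pos hmem, dtar_multinomial hp hm]

end Stmt0Aux

namespace Stmt0Aux

variable {p m k : ℕ}

noncomputable def phi (m : ℕ) : ((Fin m ⊕ Fin m) ⊕ (Fin m ⊕ Fin m)) →
    MvPolynomial (Fin m ⊕ (Fin m ⊕ Fin m)) ℤ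
  | Sum.inl (Sum.inl i) => X (Sum.inl i) - X (Sum.inr (Sum.inl i))
  | Sum.inl (Sum.inr _) => 0
  | Sum.inr (Sum.inl i) => X (Sum.inl i)
  | Sum.inr (Sum.inr i) => X (Sum.inr (Sum.inr i))

noncomputable def Psi (m : ℕ) : MvPolynomial ((Fin m ⊕ Fin m) ⊕ (Fin m ⊕ Fin m)) ℤ →ₐ[ℤ]
    MvPolynomial (Fin m ⊕ (Fin m ⊕ Fin m)) ℤ := aeval (phi m)

@[simp] theorem Psi_X_xl (i : Fin m) :
    Psi m (X (Sum.inl (Sum.inl i))) = X (Sum.inl i) - X (Sum.inr (Sum.inl i)) := aeval_X _ _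

@[simp] theorem Psi_X_xr (i : Fin m) : Psi m (X (Sum.inl (Sum.inr i))) = 0 := aeval_X _ _

@[simp] theorem Psi_X_yl (i : Fin m) : Psi m (X (Sum.inr (Sum.inl i))) = X (Sum.inl i) :=
  aeval_X _ _

@[simp] theorem Psi_X_yr (i : Fin m) :
    Psi m (X (Sum.inr (Sum.inr i))) = X (Sum.inr (Sum.inr i)) := aeval_X _ _

theorem Psi_sub (j : Fin m ⊕ Fin m) :
    Psi m (X (Sum.inr j) - X (Sum.inl j)) = X (Sum.inr j) := by
  rcases j with i | i <;> rw [map_sub] <;> simp [sub_sub_cancel]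

end Stmt0Aux


open Stmt0Aux in
/-- Non-liftability, mod `p²`, of the Frobenius trace on the quadric
`R = ℤ[x₁,…,x_{2m}]/(Σ_{i=1}^m x_i x_{m+i})`, `m ≥ 3`, expressed as an explicit
ideal non-membership in `S = ℤ[x's, y's]`.  The `2m` `x`-variables are indexed by
`Fin m ⊕ Fin m` (with `Sum.inl i` as `x_i`, `Sum.inr i` as `x_{m+i}`), and the
ambient ring is `MvPolynomial ((Fin m ⊕ Fin m) ⊕ (Fin m ⊕ Fin m)) ℤ` where the
outer `Sum.inl` gives the `x`-variables and the outer `Sum.inr` the `y`-variables. -/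
theorem stmt_0 (p : ℕ) (hp : p.Prime) (m : ℕ) (hm : 3 ≤ m)
    (fx fy : MvPolynomial ((Fin m ⊕ Fin m) ⊕ (Fin m ⊕ Fin m)) ℤ)
    (hfx : fx = ∑ i : Fin m, X (Sum.inl (Sum.inl i)) * X (Sum.inl (Sum.inr i)))
    (hfy : fy = ∑ i : Fin m, X (Sum.inr (Sum.inl i)) * X (Sum.inr (Sum.inr i)))
    (Λ : MvPolynomial ((Fin m ⊕ Fin m) ⊕ (Fin m ⊕ Fin m)) ℤ →ₐ[ℤ]
         MvPolynomial ((Fin m ⊕ Fin m) ⊕ (Fin m ⊕ Fin m)) ℤ)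
    (hΛ : Λ = aeval (fun j : (Fin m ⊕ Fin m) ⊕ (Fin m ⊕ Fin m) =>
      match j with
      | Sum.inl i => X (Sum.inl i) ^ p
      | Sum.inr i => X (Sum.inl i) ^ p + (X (Sum.inr i) - X (Sum.inl i)) ^ p))
    (G : MvPolynomial ((Fin m ⊕ Fin m) ⊕ (Fin m ⊕ Fin m)) ℤ)
    (hG : (p : MvPolynomial ((Fin m ⊕ Fin m) ⊕ (Fin m ⊕ Fin m)) ℤ) * G
      = Λ (fy - fx) - (fy - fx) ^ p)
    (k : ℕ) :
    G * ∏ j : Fin m ⊕ Fin m, (X (Sum.inr j) - X (Sum.inl j)) ^ k ∉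
      Ideal.span ({(p : MvPolynomial ((Fin m ⊕ Fin m) ⊕ (Fin m ⊕ Fin m)) ℤ), fx, fy} ∪
        Set.range fun j : Fin m ⊕ Fin m =>
          (X (Sum.inr j) - X (Sum.inl j) :
            MvPolynomial ((Fin m ⊕ Fin m) ⊕ (Fin m ⊕ Fin m)) ℤ) ^ (p + k)) := by
  intro hmem
  have hppos := hp.pos
  -- basic images under Psi
  have hPsifx : Psi m fx = 0 := by
    rw [hfx, map_sum]
    simp
  have hPsify : Psi m fy = q m := by
    rw [hfy, map_sum, q]
    refine Finset.sum_congr rfl fun i _ => ?_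
    rw [map_mul, Psi_X_yl, Psi_X_yr, w]
  -- the key divisibility coming from the ideal membership
  have key : ∀ r : MvPolynomial (Fin m ⊕ (Fin m ⊕ Fin m)) ℤ,
      (p : ℤ) ∣ coeff (Mexp p m k)
        (r * Psi m (G * ∏ j : Fin m ⊕ Fin m, (X (Sum.inr j) - X (Sum.inl j)) ^ k) *
          Wpoly p m) := by
    refine Submodule.span_induction
      (p := fun f _ => ∀ r : MvPolynomial (Fin m ⊕ (Fin m ⊕ Fin m)) ℤ,
        (p : ℤ) ∣ coeff (Mexp p m k) (r * Psi m f * Wpoly p m))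
      ?_ ?_ ?_ ?_ hmem
    · intro f hfs
      simp only [Set.mem_union, Set.mem_insert_iff, Set.mem_singleton_iff, Set.mem_range] at hfs
      rcases hfs with (rfl | rfl | rfl) | ⟨j, rfl⟩
      · intro r
        rw [map_natCast, show r * (p : MvPolynomial (Fin m ⊕ (Fin m ⊕ Fin m)) ℤ) *
          Wpoly p m = (p : MvPolynomial (Fin m ⊕ (Fin m ⊕ Fin m)) ℤ) * (r * Wpoly p m)
          from by ring, coeff_natCast_mul]
        exact Dvd.intro _ rfl
      · intro r
        rw [hPsifx, mul_zero, zero_mul, coeff_zero]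
        exact dvd_zero _
      · intro r
        rw [hPsify]
        exact dvd_coeff_mul_q_mul_W hp r
      · intro r
        rw [map_pow, Psi_sub]
        have h0 : coeff (Mexp p m k) (r * X (Sum.inr j) ^ (p + k) * Wpoly p m) = 0 := by
          apply coeff_eq_zero_of_xpow_dvd _ (Sum.inr j) (p + k)
          · exact ⟨r * Wpoly p m, by ring⟩
          · rcases j with i | i
            · simp only [Mexp_inr_inl]; omega
            · simp only [Mexp_inr_inr]; omega
        rw [h0]
        exact dvd_zero _
    · intro r
      rw [map_zero, mul_zero, zero_mul, coeff_zero]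
      exact dvd_zero _
    · intro x y hx hy ihx ihy r
      rw [map_add, mul_add, add_mul, coeff_add]
      exact dvd_add (ihx r) (ihy r)
    · intro a x hx ih r
      rw [smul_eq_mul, map_mul, show r * (Psi m a * Psi m x) * Wpoly p m =
        (r * Psi m a) * Psi m x * Wpoly p m from by ring]
      exact ih (r * Psi m a)
  -- image of the element
  have hPsiElt : Psi m (G * ∏ j : Fin m ⊕ Fin m, (X (Sum.inr j) - X (Sum.inl j)) ^ k) =
      Psi m G * PZ m k := by
    rw [map_mul, map_prod]
    congr 1
    rw [PZ]
    exact Finset.prod_congr rfl fun j _ => by rw [map_pow, Psi_sub]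
  have hdvd0 : (p : ℤ) ∣ coeff (Mexp p m k) (Psi m G * PZ m k * Wpoly p m) := by
    have := key 1
    rwa [one_mul, hPsiElt] at this
  -- computation of p * Psi G
  have hΛfy : Λ fy = ∑ i : Fin m,
      (X (Sum.inl (Sum.inl i)) ^ p +
        (X (Sum.inr (Sum.inl i)) - X (Sum.inl (Sum.inl i))) ^ p) *
      (X (Sum.inl (Sum.inr i)) ^ p +
        (X (Sum.inr (Sum.inr i)) - X (Sum.inl (Sum.inr i))) ^ p) := by
    rw [hfy, hΛ, map_sum]
    exact Finset.sum_congr rfl fun i _ => by rw [map_mul, aeval_X, aeval_X]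
  have hΛfx : Λ fx = ∑ i : Fin m,
      X (Sum.inl (Sum.inl i)) ^ p * X (Sum.inl (Sum.inr i)) ^ p := by
    rw [hfx, hΛ, map_sum]
    exact Finset.sum_congr rfl fun i _ => by rw [map_mul, aeval_X, aeval_X]
  have hPsiG : (p : MvPolynomial (Fin m ⊕ (Fin m ⊕ Fin m)) ℤ) * Psi m G =
      (∑ i : Fin m, ((X (Sum.inl i) - X (Sum.inr (Sum.inl i))) ^ p +
          X (Sum.inr (Sum.inl i)) ^ p) * X (Sum.inr (Sum.inr i)) ^ p) - q m ^ p := by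
    have h := congrArg (Psi m) hG
    rw [map_mul, map_natCast, map_sub, map_pow] at h
    have hsub : Psi m (fy - fx) = q m := by rw [map_sub, hPsify, hPsifx, sub_zero]
    have hΛsub : Λ (fy - fx) = Λ fy - Λ fx := map_sub Λ _ _
    have hPsiΛfy : Psi m (Λ fy) = ∑ i : Fin m,
        ((X (Sum.inl i) - X (Sum.inr (Sum.inl i))) ^ p +
          X (Sum.inr (Sum.inl i)) ^ p) * X (Sum.inr (Sum.inr i)) ^ p := by
      rw [hΛfy, map_sum]
      refine Finset.sum_congr rfl fun i _ => ?_
      rw [map_mul, map_add, map_add, map_pow, map_pow, map_pow, map_pow, map_sub, map_sub]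
      simp only [Psi_X_xl, Psi_X_xr, Psi_X_yl, Psi_X_yr]
      rw [sub_sub_cancel, sub_zero, zero_pow hp.ne_zero, zero_add]
    have hPsiΛfx : Psi m (Λ fx) = 0 := by
      rw [hΛfx, map_sum]
      refine Finset.sum_eq_zero fun i _ => ?_
      rw [map_mul, map_pow, map_pow, Psi_X_xr, zero_pow hp.ne_zero, mul_zero]
    rw [h, hΛsub, map_sub (Psi m), hPsiΛfy, hPsiΛfx, hsub, sub_zero]
  -- the main coefficient computation
  have hcoeff : (p : ℤ) * coeff (Mexp p m k) (Psi m G * PZ m k * Wpoly p m) =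
      - ((p * Nat.choose (2 * p - 1) (p - 1) : ℕ) : ℤ) := by
    have e3 : (p : MvPolynomial (Fin m ⊕ (Fin m ⊕ Fin m)) ℤ) *
        (Psi m G * PZ m k * Wpoly p m) =
        ((∑ i : Fin m, ((X (Sum.inl i) - X (Sum.inr (Sum.inl i))) ^ p +
            X (Sum.inr (Sum.inl i)) ^ p) * X (Sum.inr (Sum.inr i)) ^ p) - q m ^ p) *
          (PZ m k * Wpoly p m) := by rw [← hPsiG]; ring
    have e4 := congrArg (coeff (Mexp p m k)) e3
    rw [coeff_natCast_mul, sub_mul, coeff_sub] at e4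
    have e5 : coeff (Mexp p m k)
        ((∑ i : Fin m, ((X (Sum.inl i) - X (Sum.inr (Sum.inl i))) ^ p +
            X (Sum.inr (Sum.inl i)) ^ p) * X (Sum.inr (Sum.inr i)) ^ p) *
          (PZ m k * Wpoly p m)) = 0 := by
      rw [Finset.sum_mul, coeff_sum]
      apply Finset.sum_eq_zero
      intro i _
      rw [show (((X (Sum.inl i) - X (Sum.inr (Sum.inl i))) ^ p +
            X (Sum.inr (Sum.inl i)) ^ p) * X (Sum.inr (Sum.inr i)) ^ p) *
          (PZ m k * Wpoly p m) =
          ((X (Sum.inl i) - X (Sum.inr (Sum.inl i))) ^ p +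
            X (Sum.inr (Sum.inl i)) ^ p) *
          (PZ m k * (X (Sum.inr (Sum.inr i)) ^ p * Wpoly p m)) from by ring]
      exact coeff_killer hppos i _
    have e6 : coeff (Mexp p m k) (q m ^ p * (PZ m k * Wpoly p m)) =
        ((p * Nat.choose (2 * p - 1) (p - 1) : ℕ) : ℤ) := by
      rw [← mul_assoc]
      exact coeff_q_pow_main hp hm
    rw [e5, e6] at e4
    rw [e4]
    ring
  -- final contradiction
  obtain ⟨t, ht⟩ := hdvd0
  rw [ht] at hcoeff
  have hC : ((Nat.choose (2 * p - 1) (p - 1) : ℕ) : ℤ) = (p : ℤ) * (-t) := by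
    have hpne : (p : ℤ) ≠ 0 := by exact_mod_cast hp.ne_zero
    have := hcoeff
    push_cast at this ⊢
    have h2 : (p : ℤ) * ((p : ℤ) * t) = (p : ℤ) * (-(Nat.choose (2 * p - 1) (p - 1) : ℤ)) := by
      push_cast
      linarith [this]
    have h3 := mul_left_cancel₀ hpne h2
    linarith [h3]
  have : (p : ℤ) ∣ ((Nat.choose (2 * p - 1) (p - 1) : ℕ) : ℤ) := ⟨-t, hC⟩
  exact lucas_not_dvd hp (Int.natCast_dvd_natCast.mp this)
end

section
/- Let p be a prime and let m ≥ 3. In the polynomial ring S = ℤ[x₁,…,x_{2m}], set f := Σ_{i=1}^m x_i·x_{m+i}. Then for every G ∈ S with p·G = Σ_{i=1}^m x_i^p·x_{m+i}^p − f^p and every natural number k, the element G·(x₁⋯x_m)^k does NOT belong to the ideal of S generated by p, f, x₁^{p+k}, …, x_m^{p+k}. -/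
open MvPolynomial

namespace Stmt1Aux

lemma sub_single_eq {σ : Type*} [DecidableEq σ] {s b : σ →₀ ℕ} {i : σ} (hs : s i ≠ 0)
    (h : s - Finsupp.single i 1 = b) : s = b + Finsupp.single i 1 := by
  ext j
  have := congrArg (fun g => g j) h
  simp only [Finsupp.coe_tsub, Pi.sub_apply] at this
  rw [Finsupp.add_apply, ← this]
  by_cases hj : j = i
  · subst hj
    simp only [Finsupp.single_eq_same]
    omega
  · simp [Finsupp.single_eq_of_ne' (Ne.symm hj)]

lemma coeff_pderiv {σ : Type*} [DecidableEq σ] (f : MvPolynomial σ ℤ) (i : σ) (b : σ →₀ ℕ) :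
    coeff b (pderiv i f) = ((b i : ℤ) + 1) * coeff (b + Finsupp.single i 1) f := by
  induction f using MvPolynomial.induction_on' with
  | monomial s a =>
    rw [pderiv_monomial, coeff_monomial, coeff_monomial]
    by_cases hs : s i = 0
    · have h2 : s ≠ b + Finsupp.single i 1 := by
        intro h
        rw [h] at hs
        simp at hs
      rw [if_neg h2, hs]
      simp
    · by_cases he : s = b + Finsupp.single i 1
      · have h3 : s - Finsupp.single i 1 = b := by
          rw [he]; simp
        rw [if_pos h3, if_pos he, he, Finsupp.add_apply, Finsupp.single_eq_same]
        push_cast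
        ring
      · have h4 : s - Finsupp.single i 1 ≠ b := fun h => he (sub_single_eq hs h)
        rw [if_neg h4, if_neg he, mul_zero]
  | add p q hp hq =>
    rw [map_add, coeff_add, coeff_add, hp, hq, mul_add]

end Stmt1Aux

namespace Test
open Stmt1Aux

variable {m : ℕ}

noncomputable def D : Derivation ℤ (MvPolynomial (Fin m) ℤ) (MvPolynomial (Fin m) ℤ) :=
  ∑ i : Fin m, pderiv i

lemma D_apply (f : MvPolynomial (Fin m) ℤ) :
    D f = ∑ i : Fin m, pderiv i f := by
  have h : ⇑(D (m := m)) = ∑ i : Fin m, ⇑(pderiv (R := ℤ) i) :=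
    map_sum (Derivation.coeFnAddMonoidHom (R := ℤ) (A := MvPolynomial (Fin m) ℤ)
      (M := MvPolynomial (Fin m) ℤ)) (fun i : Fin m => pderiv i) Finset.univ
  rw [h, Finset.sum_apply]

lemma D_X (j : Fin m) : D (X j : MvPolynomial (Fin m) ℤ) = 1 := by
  rw [D_apply, Finset.sum_eq_single j]
  · exact pderiv_X_self j
  · intro i _ hne
    exact pderiv_X_of_ne (Ne.symm hne)
  · intro h
    exact absurd (Finset.mem_univ j) h

lemma D_sub_X (j l : Fin m) : D ((X j - X l : MvPolynomial (Fin m) ℤ)) = 0 := by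
  rw [map_sub, D_X, D_X, sub_self]

lemma D_lam (p : ℕ) (i0 i1 i2 : Fin m) :
    D (((X i0 - X i2) ^ (p - 1) * (X i1 - X i2) : MvPolynomial (Fin m) ℤ)) = 0 := by
  rw [Derivation.leibniz, Derivation.leibniz_pow, D_sub_X, D_sub_X]
  simp

end Test

namespace Test2
open Stmt1Aux Test

variable {m : ℕ}

lemma key (p : ℕ) (i0 i1 i2 : Fin m) (b : Fin m →₀ ℕ) :
    ∑ i : Fin m, ((b i : ℤ) + 1) *
      coeff (b + Finsupp.single i 1) ((X i0 - X i2) ^ (p - 1) * (X i1 - X i2)) = 0 := by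
  have h1 := congrArg (coeff b) (D_apply (((X i0 - X i2) ^ (p - 1) * (X i1 - X i2) :
    MvPolynomial (Fin m) ℤ)))
  rw [D_lam] at h1
  rw [MvPolynomial.coeff_sum] at h1
  simp only [Stmt1Aux.coeff_pderiv] at h1
  rw [← h1]
  simp

end Test2

namespace Test3
open Stmt1Aux

variable {m : ℕ}

noncomputable def uni (j : Fin m) : MvPolynomial (Fin m) ℤ →+* Polynomial ℤ :=
  (MvPolynomial.aeval (fun l : Fin m => if l = j then Polynomial.X else 0)).toRingHom

lemma coeff_single (Λ : MvPolynomial (Fin m) ℤ) (j : Fin m) (n : ℕ) :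
    Λ.coeff (Finsupp.single j n) = (uni j Λ).coeff n := by
  induction Λ using MvPolynomial.induction_on' with
  | monomial d c =>
    rw [coeff_monomial]
    by_cases hd : d.support ⊆ {j}
    · have hdd : d = Finsupp.single j (d j) := by
        ext l
        by_cases hl : l = j
        · subst hl; simp
        · rw [Finsupp.single_eq_of_ne' (Ne.symm hl)]
          by_contra h
          have : l ∈ d.support := Finsupp.mem_support_iff.2 h
          have := hd this
          simp at this
          exact hl this
      have : uni j (monomial d c) = Polynomial.C c * Polynomial.X ^ (d j) := by
        rw [uni]
        simp only [AlgHom.toRingHom_eq_coe, RingHom.coe_coe, aeval_monomial]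
        congr 1
        rw [Finsupp.prod]
        rcases Finset.subset_singleton_iff.1 hd with h | h
        · rw [h]
          have : d j = 0 := by
            by_contra hh
            have : j ∈ d.support := Finsupp.mem_support_iff.2 hh
            rw [h] at this; simp at this
          rw [this]
          simp
        · rw [h, Finset.prod_singleton]
          simp
      rw [this, Polynomial.coeff_C_mul, Polynomial.coeff_X_pow]
      by_cases he : d = Finsupp.single j n
      · rw [if_pos he]
        have h5 : n = d j := by rw [he]; simp
        rw [if_pos h5, mul_one]
      · rw [if_neg he]
        have h5 : ¬ n = d j := by
          intro h
          exact he (by rw [hdd, ← h])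
        rw [if_neg h5, mul_zero]
    · have : uni j (monomial d c) = 0 := by
        rw [uni]
        simp only [AlgHom.toRingHom_eq_coe, RingHom.coe_coe, aeval_monomial]
        obtain ⟨l, hl, hlj⟩ : ∃ l ∈ d.support, l ≠ j := by
          by_contra h
          push_neg at h
          exact hd (fun l hl => Finset.mem_singleton.2 (h l hl))
        rw [Finsupp.prod, Finset.prod_eq_zero hl]
        · rw [mul_zero]
        · rw [if_neg hlj, zero_pow (Finsupp.mem_support_iff.1 hl)]
      rw [this, Polynomial.coeff_zero]
      have : ¬ d = Finsupp.single j n := by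
        intro h
        obtain ⟨l, hl, hlj⟩ : ∃ l ∈ d.support, l ≠ j := by
          by_contra hh
          push_neg at hh
          exact hd (fun l hl => Finset.mem_singleton.2 (hh l hl))
        rw [h] at hl
        have := Finsupp.mem_support_iff.1 hl
        rw [Finsupp.single_eq_of_ne' (Ne.symm hlj)] at this
        exact this rfl
      rw [if_neg this]
  | add q r hq hr =>
    rw [coeff_add, map_add, Polynomial.coeff_add, hq, hr]

end Test3

namespace Test4
open Stmt1Aux Test3

variable {m : ℕ}

lemma lam_coeff_single {p : ℕ} (hp2 : 2 ≤ p) {i0 i1 i2 : Fin m}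
    (h01 : i0 ≠ i1) (h02 : i0 ≠ i2) (h12 : i1 ≠ i2) (j : Fin m) :
    coeff (Finsupp.single j p) ((X i0 - X i2) ^ (p - 1) * (X i1 - X i2) :
      MvPolynomial (Fin m) ℤ) = if j = i2 then (-1 : ℤ) ^ p else 0 := by
  rw [coeff_single]
  rw [map_mul, map_pow, map_sub, map_sub]
  have hX : ∀ l : Fin m, uni j (X l) = if l = j then Polynomial.X else 0 := by
    intro l
    rw [uni]
    simp [aeval_X]
  rw [hX, hX, hX]
  by_cases hj2 : i2 = j
  · subst hj2
    rw [if_neg (fun h => h02 h), if_neg (fun h => h12 h), if_pos rfl, if_pos rfl]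
    have e1 : (0 - Polynomial.X : Polynomial ℤ) ^ (p - 1) * (0 - Polynomial.X)
        = (-Polynomial.X) ^ p := by
      rw [zero_sub, ← pow_succ]
      congr 1
      omega
    rw [e1, neg_pow]
    have e2 : ((-1 : Polynomial ℤ) ^ p) = Polynomial.C ((-1 : ℤ) ^ p) := by
      rw [map_pow, map_neg, map_one]
    rw [e2, Polynomial.coeff_C_mul, Polynomial.coeff_X_pow, if_pos rfl, mul_one]
  · rw [if_neg (fun h => hj2 h), if_neg (fun h : j = i2 => hj2 h.symm)]
    by_cases hj0 : i0 = j
    · have hj1 : ¬ i1 = j := fun h => h01 (hj0 ▸ h ▸ rfl)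
      rw [if_pos hj0, if_neg hj1]
      simp
    · rw [if_neg hj0]
      by_cases hj1 : i1 = j
      · rw [if_pos hj1]
        rw [sub_self, zero_pow (by omega : p - 1 ≠ 0)]
        simp
      · rw [if_neg hj1]
        simp

end Test4

namespace Core
open Stmt1Aux

variable {m : ℕ}

noncomputable def M (k : ℕ) (a : Fin m →₀ ℕ) : (Fin m ⊕ Fin m) →₀ ℕ :=
  Finsupp.equivFunOnFinite.symm (Sum.elim (fun i => a i + k) (fun i => a i))

lemma M_inl (k : ℕ) (a : Fin m →₀ ℕ) (i : Fin m) : M k a (Sum.inl i) = a i + k := rfl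

lemma M_inr (k : ℕ) (a : Fin m →₀ ℕ) (i : Fin m) : M k a (Sum.inr i) = a i := rfl

noncomputable def fa (a : Fin m →₀ ℕ) : ℤ := ∏ i : Fin m, ((a i).factorial : ℤ)

noncomputable def psi (k : ℕ) (Λ : MvPolynomial (Fin m) ℤ)
    (h : MvPolynomial (Fin m ⊕ Fin m) ℤ) : ℤ :=
  ∑ a ∈ Λ.support, fa a * Λ.coeff a * coeff (M k a) h

lemma psi_add (k : ℕ) (Λ : MvPolynomial (Fin m) ℤ) (g h : MvPolynomial (Fin m ⊕ Fin m) ℤ) :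
    psi k Λ (g + h) = psi k Λ g + psi k Λ h := by
  rw [psi, psi, psi, ← Finset.sum_add_distrib]
  refine Finset.sum_congr rfl fun a _ => ?_
  rw [coeff_add, mul_add]

lemma psi_sub (k : ℕ) (Λ : MvPolynomial (Fin m) ℤ) (g h : MvPolynomial (Fin m ⊕ Fin m) ℤ) :
    psi k Λ (g - h) = psi k Λ g - psi k Λ h := by
  rw [psi, psi, psi, ← Finset.sum_sub_distrib]
  refine Finset.sum_congr rfl fun a _ => ?_
  rw [coeff_sub, mul_sub]

lemma psi_zero (k : ℕ) (Λ : MvPolynomial (Fin m) ℤ) : psi k Λ 0 = 0 := by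
  rw [psi]
  refine Finset.sum_eq_zero fun a _ => ?_
  rw [coeff_zero, mul_zero]

lemma psi_natmul (k : ℕ) (Λ : MvPolynomial (Fin m) ℤ) (p : ℕ)
    (h : MvPolynomial (Fin m ⊕ Fin m) ℤ) :
    psi k Λ ((p : MvPolynomial (Fin m ⊕ Fin m) ℤ) * h) = p * psi k Λ h := by
  rw [psi, psi, Finset.mul_sum]
  refine Finset.sum_congr rfl fun a _ => ?_
  have : ((p : ℕ) : MvPolynomial (Fin m ⊕ Fin m) ℤ) = C ((p : ℕ) : ℤ) := by
    simp
  rw [this, coeff_C_mul]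
  ring

lemma psi_sum {α : Type*} (k : ℕ) (Λ : MvPolynomial (Fin m) ℤ) (s : Finset α)
    (g : α → MvPolynomial (Fin m ⊕ Fin m) ℤ) :
    psi k Λ (∑ i ∈ s, g i) = ∑ i ∈ s, psi k Λ (g i) := by
  classical
  induction s using Finset.induction_on with
  | empty => simp [psi_zero]
  | insert _ _ hx ih =>
    rw [Finset.sum_insert hx, Finset.sum_insert hx, psi_add, ih]

lemma fa_add_single (b : Fin m →₀ ℕ) (i : Fin m) :
    fa (b + Finsupp.single i 1) = ((b i : ℤ) + 1) * fa b := by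
  rw [fa, fa]
  have h1 : ∀ j : Fin m, ((((b + Finsupp.single i 1) : Fin m →₀ ℕ) j).factorial : ℤ)
      = (if j = i then ((b i : ℤ) + 1) else 1) * ((b j).factorial : ℤ) := by
    intro j
    by_cases hj : j = i
    · subst hj
      rw [if_pos rfl, Finsupp.add_apply, Finsupp.single_eq_same, Nat.factorial_succ]
      push_cast
      ring
    · rw [if_neg hj, Finsupp.add_apply, Finsupp.single_eq_of_ne' (fun h => hj h.symm)]
      rw [add_zero, one_mul]
  rw [Finset.prod_congr rfl (fun j _ => h1 j), Finset.prod_mul_distrib]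
  rw [Finset.prod_ite_eq' Finset.univ i (fun _ => (b i : ℤ) + 1)]
  rw [if_pos (Finset.mem_univ i)]

lemma M_sub (k : ℕ) (a : Fin m →₀ ℕ) (i : Fin m) (h : 0 < a i) :
    M k a - Finsupp.single (Sum.inl i) 1 - Finsupp.single (Sum.inr i) 1
      = M k (a - Finsupp.single i 1) := by
  ext s
  rw [Finsupp.tsub_apply, Finsupp.tsub_apply]
  cases s with
  | inl j =>
    rw [M_inl, M_inl, Finsupp.tsub_apply]
    by_cases hj : j = i
    · subst hj
      rw [Finsupp.single_eq_same, Finsupp.single_eq_same,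
        Finsupp.single_eq_of_ne' (by simp : (Sum.inr j : Fin m ⊕ Fin m) ≠ Sum.inl j)]
      omega
    · have hne : (Sum.inl i : Fin m ⊕ Fin m) ≠ Sum.inl j := fun hh => hj (by
        injection hh with hh'
        exact hh'.symm)
      rw [Finsupp.single_eq_of_ne' hne,
        Finsupp.single_eq_of_ne' (by simp : (Sum.inr i : Fin m ⊕ Fin m) ≠ Sum.inl j),
        Finsupp.single_eq_of_ne' (fun hh => hj hh.symm : i ≠ j)]
      omega
  | inr j =>
    rw [M_inr, M_inr, Finsupp.tsub_apply,
      Finsupp.single_eq_of_ne' (by simp : (Sum.inl i : Fin m ⊕ Fin m) ≠ Sum.inr j)]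
    by_cases hj : j = i
    · subst hj
      rw [Finsupp.single_eq_same, Finsupp.single_eq_same]
      omega
    · have hne : (Sum.inr i : Fin m ⊕ Fin m) ≠ Sum.inr j := fun hh => hj (by
        injection hh with hh'
        exact hh'.symm)
      rw [Finsupp.single_eq_of_ne' hne,
        Finsupp.single_eq_of_ne' (fun hh => hj hh.symm : i ≠ j)]
      omega

lemma coeff_M_XX (k : ℕ) (a : Fin m →₀ ℕ) (i : Fin m) (h : MvPolynomial (Fin m ⊕ Fin m) ℤ) :
    coeff (M k a) (X (Sum.inl i) * X (Sum.inr i) * h)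
      = if 0 < a i then coeff (M k (a - Finsupp.single i 1)) h else 0 := by
  classical
  rw [mul_assoc, coeff_X_mul']
  by_cases h1 : Sum.inl i ∈ (M k a).support
  · rw [if_pos h1, coeff_X_mul']
    by_cases h2 : (Sum.inr i) ∈ (M k a - Finsupp.single (Sum.inl i) 1).support
    · rw [if_pos h2]
      have ha : 0 < a i := by
        have h3 := Finsupp.mem_support_iff.1 h2
        rw [Finsupp.tsub_apply, M_inr,
          Finsupp.single_eq_of_ne' (by simp : (Sum.inl i : Fin m ⊕ Fin m) ≠ Sum.inr i)] at h3
        omega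
      rw [if_pos ha, M_sub k a i ha]
    · rw [if_neg h2]
      have ha : ¬ 0 < a i := by
        intro hh
        apply h2
        rw [Finsupp.mem_support_iff, Finsupp.tsub_apply, M_inr,
          Finsupp.single_eq_of_ne' (by simp : (Sum.inl i : Fin m ⊕ Fin m) ≠ Sum.inr i)]
        omega
      rw [if_neg ha]
  · rw [if_neg h1]
    have ha : ¬ 0 < a i := by
      intro hh
      apply h1
      rw [Finsupp.mem_support_iff, M_inl]
      omega
    rw [if_neg ha]

lemma sub_add_cancel' {a : Fin m →₀ ℕ} {i : Fin m} (ha : 0 < a i) :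
    a - Finsupp.single i 1 + Finsupp.single i 1 = a := by
  apply tsub_add_cancel_of_le
  rw [Finsupp.single_le_iff]
  omega

lemma psi_f_mul (k : ℕ) (Λ : MvPolynomial (Fin m) ℤ)
    (hΛ : ∀ b : Fin m →₀ ℕ,
      ∑ i : Fin m, ((b i : ℤ) + 1) * Λ.coeff (b + Finsupp.single i 1) = 0)
    (h : MvPolynomial (Fin m ⊕ Fin m) ℤ) :
    psi k Λ ((∑ i : Fin m, X (Sum.inl i) * X (Sum.inr i)) * h) = 0 := by
  classical
  rw [Finset.sum_mul, psi_sum]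
  set B : Finset (Fin m →₀ ℕ) := Λ.support.biUnion
    (fun a => Finset.image (fun i : Fin m => a - Finsupp.single i 1) Finset.univ) with hB
  set F : Fin m → (Fin m →₀ ℕ) → ℤ := fun i b =>
    fa (b + Finsupp.single i 1) * Λ.coeff (b + Finsupp.single i 1) * coeff (M k b) h with hF
  have step : ∀ i : Fin m, psi k Λ ((X (Sum.inl i) * X (Sum.inr i)) * h) = ∑ b ∈ B, F i b := by
    intro i
    rw [psi]
    simp_rw [coeff_M_XX, mul_ite, mul_zero]
    rw [← Finset.sum_filter]
    have einj : ∀ x ∈ Λ.support.filter (fun a => 0 < a i),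
        ∀ y ∈ Λ.support.filter (fun a => 0 < a i),
        x - Finsupp.single i 1 = y - Finsupp.single i 1 → x = y := by
      intro x hx y hy hxy
      have hx' := (Finset.mem_filter.1 hx).2
      have hy' := (Finset.mem_filter.1 hy).2
      rw [← sub_add_cancel' hx', ← sub_add_cancel' hy', hxy]
    have e1 : ∑ b ∈ (Λ.support.filter (fun a => 0 < a i)).image
        (fun a => a - Finsupp.single i 1), F i b
        = ∑ a ∈ Λ.support.filter (fun a => 0 < a i), F i (a - Finsupp.single i 1) :=
      Finset.sum_image einj
    have e2 : ∀ a ∈ Λ.support.filter (fun a => 0 < a i),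
        F i (a - Finsupp.single i 1)
          = fa a * Λ.coeff a * coeff (M k (a - Finsupp.single i 1)) h := by
      intro a ha
      have ha' := (Finset.mem_filter.1 ha).2
      rw [hF]
      simp only []
      rw [sub_add_cancel' ha']
    have e3 : ∑ b ∈ (Λ.support.filter (fun a => 0 < a i)).image
        (fun a => a - Finsupp.single i 1), F i b = ∑ b ∈ B, F i b := by
      apply Finset.sum_subset
      · intro b hb
        rcases Finset.mem_image.1 hb with ⟨a, ha, rfl⟩
        rcases Finset.mem_filter.1 ha with ⟨ha1, _⟩
        exact Finset.mem_biUnion.2 ⟨a, ha1, Finset.mem_image.2 ⟨i, Finset.mem_univ i, rfl⟩⟩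
      · intro b _ hb
        have hco : Λ.coeff (b + Finsupp.single i 1) = 0 := by
          by_contra hc
          apply hb
          apply Finset.mem_image.2
          refine ⟨b + Finsupp.single i 1, ?_, ?_⟩
          · apply Finset.mem_filter.2
            refine ⟨Finsupp.mem_support_iff.2 hc, ?_⟩
            rw [Finsupp.add_apply, Finsupp.single_eq_same]
            omega
          · rw [add_tsub_cancel_right]
        rw [hF]
        simp only []
        rw [hco, mul_zero, zero_mul]
    rw [← e3, e1, Finset.sum_congr rfl e2]
  rw [Finset.sum_congr rfl (fun i _ => step i), Finset.sum_comm]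
  refine Finset.sum_eq_zero fun b _ => ?_
  rw [hF]
  simp only []
  rw [← Finset.sum_mul]
  have : ∑ i : Fin m, fa (b + Finsupp.single i 1) * Λ.coeff (b + Finsupp.single i 1)
      = fa b * ∑ i : Fin m, ((b i : ℤ) + 1) * Λ.coeff (b + Finsupp.single i 1) := by
    rw [Finset.mul_sum]
    refine Finset.sum_congr rfl fun i _ => ?_
    rw [fa_add_single]
    ring
  rw [this, hΛ b, mul_zero, zero_mul]

lemma psi_pow_dvd (k p : ℕ) (hp : 0 < p) (Λ : MvPolynomial (Fin m) ℤ) (j : Fin m)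
    (h : MvPolynomial (Fin m ⊕ Fin m) ℤ) :
    (p : ℤ) ∣ psi k Λ (X (Sum.inl j) ^ (p + k) * h) := by
  classical
  rw [psi]
  apply Finset.dvd_sum
  intro a _
  rw [X_pow_eq_monomial, coeff_monomial_mul']
  by_cases hle : Finsupp.single (Sum.inl j) (p + k) ≤ M k a
  · rw [if_pos hle]
    have haj : p ≤ a j := by
      have := (Finsupp.single_le_iff).1 hle
      rw [M_inl] at this
      omega
    have hdvd : (p : ℤ) ∣ fa a := by
      rw [fa]
      refine dvd_trans ?_ (Finset.dvd_prod_of_mem _ (Finset.mem_univ j))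
      exact_mod_cast Int.natCast_dvd_natCast.2 (Nat.dvd_factorial hp haj)
    exact Dvd.dvd.mul_right (Dvd.dvd.mul_right hdvd _) _
  · rw [if_neg hle, mul_zero]
    exact dvd_zero _

lemma prod_monomial_one {α : Type*} (s : Finset α) (g : α → ((Fin m ⊕ Fin m) →₀ ℕ)) :
    (∏ x ∈ s, (monomial (g x) (1:ℤ) : MvPolynomial (Fin m ⊕ Fin m) ℤ))
      = monomial (∑ x ∈ s, g x) 1 := by
  classical
  induction s using Finset.induction_on with
  | empty =>
    rw [Finset.prod_empty, Finset.sum_empty, monomial_zero', C_1]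
  | insert _ _ hx ih =>
    rw [Finset.prod_insert hx, Finset.sum_insert hx, ih, monomial_mul, one_mul]

lemma fa_single (i : Fin m) (p : ℕ) : fa (Finsupp.single i p) = (p.factorial : ℤ) := by
  rw [fa]
  have h1 : ∀ l : Fin m, (((Finsupp.single i p) l).factorial : ℤ)
      = if i = l then (p.factorial : ℤ) else 1 := by
    intro l
    rw [Finsupp.single_apply]
    split
    · rfl
    · rw [Nat.factorial_zero, Nat.cast_one]
  rw [Finset.prod_congr rfl (fun l _ => h1 l), Finset.prod_ite_eq Finset.univ i
    (fun _ => (p.factorial : ℤ)), if_pos (Finset.mem_univ i)]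

lemma psi_main_term (k p : ℕ) (Λ : MvPolynomial (Fin m) ℤ) :
    psi k Λ ((∑ i : Fin m, X (Sum.inl i) ^ p * X (Sum.inr i) ^ p)
        * (∏ i : Fin m, X (Sum.inl i)) ^ k)
      = ∑ i : Fin m, (p.factorial : ℤ) * Λ.coeff (Finsupp.single i p) := by
  classical
  rw [Finset.sum_mul, psi_sum]
  refine Finset.sum_congr rfl fun i _ => ?_
  have ht : ((∏ l : Fin m, X (Sum.inl l)) ^ k : MvPolynomial (Fin m ⊕ Fin m) ℤ)
      = monomial (∑ l : Fin m, Finsupp.single (Sum.inl l) k) 1 := by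
    rw [← Finset.prod_pow,
      Finset.prod_congr rfl (fun l _ => X_pow_eq_monomial),
      prod_monomial_one]
  have hmono : (X (Sum.inl i) ^ p * X (Sum.inr i) ^ p : MvPolynomial (Fin m ⊕ Fin m) ℤ)
        * (∏ l : Fin m, X (Sum.inl l)) ^ k
      = monomial (Finsupp.single (Sum.inl i) p + Finsupp.single (Sum.inr i) p
          + ∑ l : Fin m, Finsupp.single (Sum.inl l) k) 1 := by
    rw [ht, X_pow_eq_monomial, X_pow_eq_monomial, monomial_mul, monomial_mul,
      one_mul, one_mul]
  rw [hmono, psi]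
  have hsum_inl : ∀ l : Fin m,
      (∑ l' : Fin m, Finsupp.single (Sum.inl l' : Fin m ⊕ Fin m) k) (Sum.inl l) = k := by
    intro l
    rw [Finsupp.finset_sum_apply]
    rw [Finset.sum_eq_single l]
    · rw [Finsupp.single_eq_same]
    · intro l' _ hne
      refine Finsupp.single_eq_of_ne' fun hh => hne ?_
      injection hh
    · intro hh
      exact absurd (Finset.mem_univ l) hh
  have hsum_inr : ∀ l : Fin m,
      (∑ l' : Fin m, Finsupp.single (Sum.inl l' : Fin m ⊕ Fin m) k) (Sum.inr l) = 0 := by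
    intro l
    rw [Finsupp.finset_sum_apply]
    refine Finset.sum_eq_zero fun l' _ => ?_
    exact Finsupp.single_eq_of_ne' (by simp)
  have hiff : ∀ a : Fin m →₀ ℕ,
      (Finsupp.single (Sum.inl i) p + Finsupp.single (Sum.inr i) p
        + ∑ l : Fin m, Finsupp.single (Sum.inl l) k) = M k a ↔ a = Finsupp.single i p := by
    intro a
    constructor
    · intro he
      ext l
      have h2 := congrArg (fun g : (Fin m ⊕ Fin m) →₀ ℕ => g (Sum.inr l)) he
      simp only [Finsupp.add_apply, M_inr] at h2
      rw [hsum_inr l] at h2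
      simp only [Finsupp.single_apply] at h2 ⊢
      by_cases hl : i = l
      · subst hl
        simp only [if_pos rfl] at h2 ⊢
        simp only [eq_self_iff_true, if_true] at h2 ⊢
        simp at h2
        omega
      · have hne1 : ¬ (Sum.inl i : Fin m ⊕ Fin m) = Sum.inr l := by simp
        have hne2 : ¬ (Sum.inr i : Fin m ⊕ Fin m) = Sum.inr l := by
          simp only [Sum.inr.injEq]
          exact hl
        rw [if_neg hne1, if_neg hne2] at h2
        rw [if_neg hl]
        omega
    · intro he
      subst he
      ext s
      cases s with
      | inl l =>
        simp only [Finsupp.add_apply, M_inl]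
        rw [hsum_inl l]
        simp only [Finsupp.single_apply]
        have hne1 : ¬ (Sum.inr i : Fin m ⊕ Fin m) = Sum.inl l := by simp
        rw [if_neg hne1]
        by_cases hl : i = l
        · subst hl
          rw [if_pos rfl, if_pos rfl]
          omega
        · have hne2 : ¬ (Sum.inl i : Fin m ⊕ Fin m) = Sum.inl l := by
            simp only [Sum.inl.injEq]
            exact hl
          rw [if_neg hne2, if_neg hl]
          omega
      | inr l =>
        simp only [Finsupp.add_apply, M_inr]
        rw [hsum_inr l]
        simp only [Finsupp.single_apply]
        have hne1 : ¬ (Sum.inl i : Fin m ⊕ Fin m) = Sum.inr l := by simp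
        rw [if_neg hne1]
        by_cases hl : i = l
        · subst hl
          rw [if_pos rfl, if_pos rfl]
          omega
        · have hne2 : ¬ (Sum.inr i : Fin m ⊕ Fin m) = Sum.inr l := by
            simp only [Sum.inr.injEq]
            exact hl
          rw [if_neg hne2, if_neg hl]
          omega
  have hterm : ∀ a ∈ Λ.support, fa a * Λ.coeff a
      * coeff (M k a) (monomial (Finsupp.single (Sum.inl i) p + Finsupp.single (Sum.inr i) p
          + ∑ l : Fin m, Finsupp.single (Sum.inl l) k) (1:ℤ))
      = if a = Finsupp.single i p then fa a * Λ.coeff a else 0 := by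
    intro a _
    rw [coeff_monomial, if_congr (hiff a) rfl rfl, mul_ite, mul_one, mul_zero]
  rw [Finset.sum_congr rfl hterm, Finset.sum_ite_eq' Λ.support (Finsupp.single i p)
    (fun a => fa a * Λ.coeff a)]
  by_cases hmem : Finsupp.single i p ∈ Λ.support
  · rw [if_pos hmem, fa_single]
  · rw [if_neg hmem, MvPolynomial.notMem_support_iff.1 hmem, mul_zero]

end Core


/-- For `R = ℤ[x₁,…,x_{2m}]/(f)` with `f = Σ x_i x_{m+i}`, `m ≥ 3`, the
local cohomology class `[φ_p(f)/(x₁⋯x_m)^p]` is nonzero in `H^m(R/pR)`: for every `G`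
with `p·G = Σ x_i^p x_{m+i}^p − f^p` and every `k`, `G·(x₁⋯x_m)^k` is not in the ideal
`(p, f, x₁^{p+k}, …, x_m^{p+k})`. The `x`-variables are indexed by `Fin m ⊕ Fin m`,
with `Sum.inl i` playing the role of `x_i` and `Sum.inr i` the role of `x_{m+i}`. -/
theorem stmt_1 (p : ℕ) (hp : p.Prime) (m : ℕ) (hm : 3 ≤ m)
    (f : MvPolynomial (Fin m ⊕ Fin m) ℤ)
    (hf : f = ∑ i : Fin m, X (Sum.inl i) * X (Sum.inr i))
    (G : MvPolynomial (Fin m ⊕ Fin m) ℤ)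
    (hG : (p : MvPolynomial (Fin m ⊕ Fin m) ℤ) * G
      = (∑ i : Fin m, X (Sum.inl i) ^ p * X (Sum.inr i) ^ p) - f ^ p)
    (k : ℕ) :
    G * (∏ i : Fin m, X (Sum.inl i)) ^ k ∉
      Ideal.span ({(p : MvPolynomial (Fin m ⊕ Fin m) ℤ), f} ∪
        Set.range fun i : Fin m =>
          (X (Sum.inl i) : MvPolynomial (Fin m ⊕ Fin m) ℤ) ^ (p + k)) := by
  intro hmem
  classical
  have hp2 : 2 ≤ p := hp.two_le
  set i0 : Fin m := ⟨0, by omega⟩ with hi0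
  set i1 : Fin m := ⟨1, by omega⟩ with hi1
  set i2 : Fin m := ⟨2, by omega⟩ with hi2
  have h01 : i0 ≠ i1 := by
    rw [hi0, hi1, Ne, Fin.mk.injEq]
    omega
  have h02 : i0 ≠ i2 := by
    rw [hi0, hi2, Ne, Fin.mk.injEq]
    omega
  have h12 : i1 ≠ i2 := by
    rw [hi1, hi2, Ne, Fin.mk.injEq]
    omega
  set Λ : MvPolynomial (Fin m) ℤ := (X i0 - X i2) ^ (p - 1) * (X i1 - X i2) with hL
  have hkey : ∀ b : Fin m →₀ ℕ,
      ∑ i : Fin m, ((b i : ℤ) + 1) * Λ.coeff (b + Finsupp.single i 1) = 0 :=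
    fun b => Test2.key p i0 i1 i2 b
  have hdvd : ∀ g ∈ Ideal.span ({(p : MvPolynomial (Fin m ⊕ Fin m) ℤ), f} ∪
        Set.range fun i : Fin m =>
          (X (Sum.inl i) : MvPolynomial (Fin m ⊕ Fin m) ℤ) ^ (p + k)),
      ∀ s : MvPolynomial (Fin m ⊕ Fin m) ℤ, (p : ℤ) ∣ Core.psi k Λ (s * g) := by
    intro g hg
    induction hg using Submodule.span_induction with
    | mem x hx =>
      rcases hx with hx | hx
      · rcases hx with hx | hx
        · intro s
          rw [hx, mul_comm, Core.psi_natmul]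
          exact Dvd.intro _ rfl
        · intro s
          rw [Set.mem_singleton_iff] at hx
          rw [hx, mul_comm, hf, Core.psi_f_mul k Λ hkey]
          exact dvd_zero _
      · rcases hx with ⟨i, rfl⟩
        intro s
        rw [mul_comm]
        exact Core.psi_pow_dvd k p hp.pos Λ i s
    | zero =>
      intro s
      rw [mul_zero, Core.psi_zero]
      exact dvd_zero _
    | add x y hx hy ihx ihy =>
      intro s
      rw [mul_add, Core.psi_add]
      exact dvd_add (ihx s) (ihy s)
    | smul a x hx ih =>
      intro s
      rw [smul_eq_mul, ← mul_assoc]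
      exact ih (s * a)
  have hdiv : (p : ℤ) ∣ Core.psi k Λ (G * (∏ i : Fin m, X (Sum.inl i)) ^ k) := by
    have := hdvd _ hmem 1
    rwa [one_mul] at this
  have hfp : f ^ p * (∏ i : Fin m, X (Sum.inl i)) ^ k
      = (∑ i : Fin m, X (Sum.inl i) * X (Sum.inr i))
        * (f ^ (p - 1) * (∏ i : Fin m, X (Sum.inl i)) ^ k) := by
    rw [← hf, ← mul_assoc]
    congr 1
    conv_lhs => rw [show p = (p - 1) + 1 by omega]
    rw [pow_succ, mul_comm]
  have hpsi : (p : ℤ) * Core.psi k Λ (G * (∏ i : Fin m, X (Sum.inl i)) ^ k)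
      = (p.factorial : ℤ) * (-1) ^ p := by
    rw [← Core.psi_natmul, ← mul_assoc, hG, sub_mul, Core.psi_sub, hfp,
      Core.psi_f_mul k Λ hkey, sub_zero, Core.psi_main_term]
    have : ∀ i : Fin m, (p.factorial : ℤ) * Λ.coeff (Finsupp.single i p)
        = if i = i2 then (p.factorial : ℤ) * (-1) ^ p else 0 := by
      intro i
      rw [hL, Test4.lam_coeff_single hp2 h01 h02 h12 i, mul_ite, mul_zero]
    rw [Finset.sum_congr rfl (fun i _ => this i),
      Finset.sum_ite_eq' Finset.univ i2 (fun _ => (p.factorial : ℤ) * (-1) ^ p),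
      if_pos (Finset.mem_univ i2)]
  obtain ⟨d, hd⟩ := hdiv
  rw [hd] at hpsi
  have hfac : (p.factorial : ℤ) = (p : ℤ) * ((p - 1).factorial : ℤ) := by
    have : p.factorial = p * (p - 1).factorial := by
      conv_lhs => rw [show p = (p - 1) + 1 by omega]
      rw [Nat.factorial_succ, show (p - 1) + 1 = p by omega]
    rw [this]
    push_cast
    ring
  rw [hfac, mul_assoc] at hpsi
  have hpne : (p : ℤ) ≠ 0 := by
    exact_mod_cast hp.ne_zero
  have hcancel : (p : ℤ) * d = ((p - 1).factorial : ℤ) * (-1) ^ p :=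
    mul_left_cancel₀ hpne hpsi
  have hsq : ((-1 : ℤ) ^ p) * ((-1) ^ p) = 1 := by
    rw [← pow_add]
    exact Even.neg_one_pow ⟨p, rfl⟩
  have hdvd2 : (p : ℤ) ∣ ((p - 1).factorial : ℤ) := by
    have h1 : (p : ℤ) ∣ ((p - 1).factorial : ℤ) * (-1) ^ p := ⟨d, hcancel.symm⟩
    have h2 := Dvd.dvd.mul_right h1 ((-1 : ℤ) ^ p)
    rwa [mul_assoc, hsq, mul_one] at h2
  have hdvd3 : p ∣ (p - 1).factorial := Int.natCast_dvd_natCast.1 hdvd2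
  have := (Nat.Prime.dvd_factorial hp).1 hdvd3
  omega
end

section
/- Let p be a prime and let m ≥ 3. In the polynomial ring ℤ[z₁,…,z_{m−1}], let h be the (unique) polynomial with p·h = z₁^p + ⋯ + z_{m−1}^p + (−1)^p·(z₁ + ⋯ + z_{m−1})^p. Then h does NOT belong to the ideal generated by p, z₁^p, …, z_{m−1}^p. -/
open MvPolynomial

/-- In `ℤ[z₁,…,z_{m−1}]` with `m ≥ 3`, the polynomial `h` with
`p·h = z₁^p + ⋯ + z_{m−1}^p + (−1)^p (z₁+⋯+z_{m−1})^p` does not lie in the ideal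
`(p, z₁^p, …, z_{m−1}^p)`. -/
theorem stmt_2 (p : ℕ) (hp : p.Prime) (m : ℕ) (hm : 3 ≤ m)
    (h : MvPolynomial (Fin (m - 1)) ℤ)
    (hh : (p : MvPolynomial (Fin (m - 1)) ℤ) * h
      = (∑ i : Fin (m - 1), X i ^ p) + (-1) ^ p * (∑ i : Fin (m - 1), X i) ^ p) :
    h ∉ Ideal.span ({(p : MvPolynomial (Fin (m - 1)) ℤ)} ∪
      Set.range fun i : Fin (m - 1) => (X i : MvPolynomial (Fin (m - 1)) ℤ) ^ p) := by
  intro hmem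
  classical
  have hp2 := hp.two_le
  have h0 : 0 < m - 1 := by omega
  have h1 : 1 < m - 1 := by omega
  set i0 : Fin (m - 1) := ⟨0, h0⟩ with hi0
  set i1 : Fin (m - 1) := ⟨1, h1⟩ with hi1
  have hne : i0 ≠ i1 := by simp [hi0, hi1, Fin.ext_iff]
  set g : Fin (m - 1) → Polynomial (Polynomial ℤ) :=
    fun i => (if i = i0 then Polynomial.X else 0) +
      (if i = i1 then Polynomial.C Polynomial.X else 0) with hg
  set L : MvPolynomial (Fin (m - 1)) ℤ →ₗ[ℤ] ℤ :=
    (Polynomial.lcoeff ℤ 1) ∘ₗ (Polynomial.lcoeff (Polynomial ℤ) (p - 1)) ∘ₗ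
      (aeval g).toLinearMap with hL
  have hLdef : ∀ q, L q = ((aeval g q).coeff (p - 1)).coeff 1 := fun q => rfl
  -- values of g
  have hg0 : g i0 = Polynomial.X := by simp [hg, hne]
  have hg1 : g i1 = Polynomial.C Polynomial.X := by simp [hg, Ne.symm hne]
  -- L kills r * X i ^ p
  have hgen : ∀ (r : MvPolynomial (Fin (m - 1)) ℤ) (i : Fin (m - 1)),
      L (r * X i ^ p) = 0 := by
    intro r i
    have key : aeval g (r * X i ^ p) = aeval g r * (g i) ^ p := by
      simp [map_mul, map_pow]
    rw [hLdef, key]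
    by_cases hc0 : i = i0
    · subst hc0
      rw [hg0, Polynomial.coeff_mul_X_pow', if_neg (by omega)]
      simp
    · by_cases hc1 : i = i1
      · subst hc1
        rw [hg1, ← Polynomial.C_pow, Polynomial.coeff_mul_C,
          Polynomial.coeff_mul_X_pow', if_neg (by omega)]
      · have : g i = 0 := by simp [hg, hc0, hc1]
        rw [this, zero_pow hp.ne_zero, mul_zero]
        simp
  -- sum of the variables maps to X + C X
  have hsum : aeval g (∑ i : Fin (m - 1), (X i : MvPolynomial (Fin (m - 1)) ℤ))
      = Polynomial.X + Polynomial.C Polynomial.X := by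
    rw [show (aeval g) (∑ i : Fin (m - 1), (X i : MvPolynomial (Fin (m - 1)) ℤ))
        = ∑ i : Fin (m - 1), aeval g (X i) from map_sum _ _ _]
    simp only [aeval_X, hg]
    rw [Finset.sum_add_distrib, Finset.sum_ite_eq' Finset.univ i0 fun _ => Polynomial.X,
      Finset.sum_ite_eq' Finset.univ i1 fun _ => Polynomial.C Polynomial.X]
    simp
  -- L of the p-th power of the sum is p
  have hQ : L ((∑ i : Fin (m - 1), X i) ^ p) = p := by
    rw [hLdef, map_pow, hsum, Polynomial.coeff_X_add_C_pow]
    have e1 : p - (p - 1) = 1 := by omega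
    have e2 : p.choose (p - 1) = p := by
      have := Nat.choose_symm (n := p) (k := 1) (by omega)
      simpa [Nat.choose_one_right] using this
    rw [e1, e2, pow_one]
    simp [Polynomial.coeff_X_mul]
  -- L of the sum of p-th powers is 0
  have hXp : L (∑ i : Fin (m - 1), X i ^ p) = 0 := by
    rw [map_sum]
    refine Finset.sum_eq_zero fun i _ => ?_
    simpa using hgen 1 i
  -- apply L to hh
  have hsc : ∀ (c : ℤ) (q : MvPolynomial (Fin (m - 1)) ℤ),
      L ((c : MvPolynomial (Fin (m - 1)) ℤ) * q) = c * L q := by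
    intro c q
    have : (c : MvPolynomial (Fin (m - 1)) ℤ) * q = c • q := by
      rw [zsmul_eq_mul]
    rw [this, map_smul, smul_eq_mul]
  have hmain : (p : ℤ) * L h = (-1) ^ p * (p : ℤ) := by
    have := congrArg L hh
    rw [map_add] at this
    have l1 : L ((p : MvPolynomial (Fin (m - 1)) ℤ) * h) = (p : ℤ) * L h := by
      have := hsc (p : ℤ) h
      simpa using this
    have l2 : L ((-1) ^ p * (∑ i : Fin (m - 1), X i) ^ p)
        = (-1) ^ p * (p : ℤ) := by
      have := hsc ((-1) ^ p : ℤ) ((∑ i : Fin (m - 1), X i) ^ p)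
      push_cast at this
      rw [this, hQ]
    rw [l1, hXp, l2, zero_add] at this
    exact this
  have hLh : L h = (-1) ^ p := by
    have hpne : (p : ℤ) ≠ 0 := by exact_mod_cast hp.ne_zero
    exact mul_left_cancel₀ hpne (by linarith [hmain])
  -- decompose the membership
  rw [Ideal.span_union, Submodule.mem_sup] at hmem
  obtain ⟨a, ha, b, hb, hab⟩ := hmem
  rw [Ideal.mem_span_singleton] at ha
  obtain ⟨c, hc⟩ := ha
  have hLb : L b = 0 := by
    have key : ∀ q ∈ Ideal.span (Set.range fun i : Fin (m - 1) =>
        (X i : MvPolynomial (Fin (m - 1)) ℤ) ^ p),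
        ∀ r, L (r * q) = 0 := by
      intro q hq
      refine Submodule.span_induction ?_ ?_ ?_ ?_ hq
      · rintro x ⟨i, rfl⟩ r
        exact hgen r i
      · intro r; simp
      · intro x y _ _ hx hy r
        rw [mul_add, map_add, hx r, hy r, add_zero]
      · intro s x _ hx r
        rw [smul_eq_mul, ← mul_assoc]
        exact hx (r * s)
    simpa using key b hb 1
  have hLa : L a = (p : ℤ) * L c := by
    rw [hc]
    have := hsc (p : ℤ) c
    simpa using this
  have : (-1 : ℤ) ^ p = (p : ℤ) * L c := by
    rw [← hLh, ← hab, map_add, hLa, hLb, add_zero]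
  have hdvd : (p : ℤ) ∣ 1 := by
    refine ⟨L c * (-1) ^ p, ?_⟩
    have sq : ((-1 : ℤ) ^ p) * ((-1 : ℤ) ^ p) = 1 := by
      rw [← pow_add, ← two_mul, pow_mul]
      norm_num
    calc (1 : ℤ) = ((-1) ^ p) * ((-1) ^ p) := sq.symm
      _ = ((p : ℤ) * L c) * (-1) ^ p := by rw [← this]
      _ = (p : ℤ) * (L c * (-1) ^ p) := by ring
  have := Int.le_of_dvd one_pos hdvd
  omega
end

section
/- Let p be a prime. In the polynomial ring ℤ[z₁, z₂], let h be the (unique) polynomial with p·h = z₁^p − z₂^p + (z₂ − z₁)^p. Then h does NOT belong to the ideal generated by p, z₁^p, z₂^p. -/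
open MvPolynomial

/-- In `ℤ[z₁, z₂]`, the polynomial `h` with
`p·h = z₁^p − z₂^p + (z₂ − z₁)^p` does not lie in the ideal `(p, z₁^p, z₂^p)`. -/
theorem stmt_7 (p : ℕ) (hp : p.Prime)
    (h : MvPolynomial (Fin 2) ℤ)
    (hh : (p : MvPolynomial (Fin 2) ℤ) * h
      = X 0 ^ p - X 1 ^ p + (X 1 - X 0) ^ p) :
    h ∉ Ideal.span {(p : MvPolynomial (Fin 2) ℤ), X 0 ^ p, X 1 ^ p} := by
  have hp2 : 2 ≤ p := hp.two_le
  set m : Fin 2 →₀ ℕ := Finsupp.single 0 (p - 1) + Finsupp.single 1 1 with hm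
  have hm0 : m 0 = p - 1 := by simp [hm]
  have hm1 : m 1 = 1 := by simp [hm]
  have hcast : (p : MvPolynomial (Fin 2) ℤ) = C (p : ℤ) := by
    simp
  -- coefficient of m in X 0 ^ p is 0
  have hc0 : coeff m (X (0 : Fin 2) ^ p : MvPolynomial (Fin 2) ℤ) = 0 := by
    rw [coeff_X_pow, if_neg]
    intro hc
    have := DFunLike.congr_fun hc 1
    simp [hm1] at this
  have hc1 : coeff m (X (1 : Fin 2) ^ p : MvPolynomial (Fin 2) ℤ) = 0 := by
    rw [coeff_X_pow, if_neg]
    intro hc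
    have := DFunLike.congr_fun hc 0
    simp [hm0] at this
    omega
  -- coefficient of m in (X 1 - X 0)^p is (-1)^(1+p) * p
  have hterm : ∀ k, ((-1 : MvPolynomial (Fin 2) ℤ) ^ (k + p) * X 1 ^ k * X 0 ^ (p - k)
      * (p.choose k : MvPolynomial (Fin 2) ℤ))
      = monomial (Finsupp.single 1 k + Finsupp.single 0 (p - k))
          ((-1 : ℤ) ^ (k + p) * (p.choose k : ℤ)) := by
    intro k
    rw [X_pow_eq_monomial, X_pow_eq_monomial]
    have h1 : ((-1 : MvPolynomial (Fin 2) ℤ) ^ (k + p)) = C ((-1 : ℤ) ^ (k + p)) := by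
      simp
    have h2 : ((p.choose k : ℕ) : MvPolynomial (Fin 2) ℤ) = C ((p.choose k : ℤ)) := by
      simp
    rw [h1, h2, C_mul_monomial, monomial_mul, mul_comm, C_mul_monomial]
    simp [mul_comm]
  have hcsub : coeff m ((X 1 - X 0 : MvPolynomial (Fin 2) ℤ) ^ p)
      = (-1 : ℤ) ^ (1 + p) * p := by
    rw [sub_pow, coeff_sum]
    rw [Finset.sum_congr rfl (fun k _ => by rw [hterm k, coeff_monomial])]
    rw [Finset.sum_eq_single 1]
    · rw [if_pos]
      · simp [Nat.choose_one_right]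
      · rw [hm]; abel
    · intro k _ hk1
      rw [if_neg]
      intro hc
      have := DFunLike.congr_fun hc 1
      simp [hm1] at this
      exact hk1 this
    · intro hmem
      exfalso
      exact hmem (Finset.mem_range.2 (by omega))
  -- hence coeff m h = (-1)^(1+p)
  have hch : coeff m h = (-1 : ℤ) ^ (1 + p) := by
    have := congrArg (coeff m) hh
    rw [hcast, coeff_C_mul, coeff_add, coeff_sub, hc0, hc1, hcsub] at this
    have hp0 : (p : ℤ) ≠ 0 := by exact_mod_cast hp.ne_zero
    simp only [sub_zero, zero_add] at this
    rw [mul_comm] at this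
    exact mul_left_cancel₀ hp0 (by linarith)
  intro hmem
  rw [Ideal.span_insert, Submodule.mem_sup] at hmem
  obtain ⟨y, hy, z, hz, hyz⟩ := hmem
  rw [Ideal.mem_span_singleton] at hy
  obtain ⟨a, ha⟩ := hy
  rw [Ideal.span_insert, Submodule.mem_sup] at hz
  obtain ⟨u, hu, v, hv, huv⟩ := hz
  rw [Ideal.mem_span_singleton] at hu hv
  obtain ⟨b, hb⟩ := hu
  obtain ⟨c, hc⟩ := hv
  have heq : h = (p : MvPolynomial (Fin 2) ℤ) * a + X 0 ^ p * b + X 1 ^ p * c := by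
    rw [← hyz, ← huv, ha, hb, hc]; ring
  have hcb : coeff m (X (0 : Fin 2) ^ p * b : MvPolynomial (Fin 2) ℤ) = 0 := by
    rw [mul_comm, X_pow_eq_monomial, coeff_mul_monomial', if_neg]
    intro hle
    have := hle 0
    simp [hm0] at this
    omega
  have hcc : coeff m (X (1 : Fin 2) ^ p * c : MvPolynomial (Fin 2) ℤ) = 0 := by
    rw [mul_comm, X_pow_eq_monomial, coeff_mul_monomial', if_neg]
    intro hle
    have := hle 1
    simp [hm1] at this
    omega
  have : (p : ℤ) ∣ coeff m h := by
    rw [heq, coeff_add, coeff_add, hcb, hcc, add_zero, add_zero, hcast, coeff_C_mul]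
    exact Dvd.intro _ rfl
  rw [hch] at this
  have h1 : (p : ℤ) ∣ 1 := by
    have := this.mul_right ((-1 : ℤ) ^ (1 + p))
    rwa [← pow_add, ← two_mul, pow_mul, neg_one_sq, one_pow] at this
  have := Int.le_of_dvd one_pos h1
  omega
end

section
/- Let p be a prime, let d ≥ 1, let m < d, and let S = ℤ[x₀,…,x_d] be a polynomial ring. Suppose f = g + p·h where g ∈ S belongs to the ideal (x₀,…,x_m) of S and h ∈ S is a polynomial only in the indeterminates x_{m+1},…,x_d. Let P = ℤ[x₀,…,x_d, y₀,…,y_d], let f_y denote the image of f under x_i ↦ y_i, and let Λ_p : P → P be the ℤ-algebra endomorphism with Λ_p(x_i) = x_i^p and Λ_p(y_i) = x_i^p + (y_i − x_i)^p. Let G ∈ P satisfy p·G = Λ_p(f_y − f) − (f_y − f)^p, and let g′ ∈ S satisfy p·g′ = Λ_p(g) − g^p. If there exists a natural number k such that G·∏_{i=0}^d (y_i − x_i)^k belongs to the ideal of P generated by p, f, f_y, and (y_i − x_i)^{p+k} for 0 ≤ i ≤ d, then there exists a natural number k′ such that g′·(x₀⋯x_m)^{k′} belongs to the ideal of S generated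 by p, f, x₀^{p+k′}, …, x_m^{p+k′}. -/
open MvPolynomial

private lemma map_span_mem {R R' F : Type*} [CommRing R] [CommRing R'] [FunLike F R R']
    [RingHomClass F R R'] (φ : F) {s : Set R} {q : R} (hq : q ∈ Ideal.span s) {I : Ideal R'}
    (hs : ∀ x ∈ s, φ x ∈ I) : φ q ∈ I := by
  induction hq using Submodule.span_induction with
  | mem x hx => exact hs x hx
  | zero => rw [map_zero]; exact I.zero_mem
  | add x y hx hy hx' hy' => rw [map_add]; exact I.add_mem hx' hy'
  | smul a x hx hx' => rw [smul_eq_mul, map_mul]; exact I.mul_mem_left _ hx'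

private lemma key_binom {R : Type*} [CommRing R] {p : ℕ} (hp : 2 ≤ p) (a b : R)
    {I : Ideal R} (hpI : (p : R) ∈ I) (hbI : b ∈ I) :
    ∃ U ∈ I, ((p : R) * a + b) ^ p = b ^ p + (p : R) * U := by
  refine ⟨∑ j ∈ Finset.range p,
      ((p.choose (j + 1) : R) * (p : R) ^ j * a ^ (j + 1)) * b ^ (p - 1 - j), ?_, ?_⟩
  · refine Ideal.sum_mem _ fun j hj => ?_
    have hj' : j < p := Finset.mem_range.mp hj
    by_cases hcase : j = p - 1
    · have hpw : (p : R) ^ j ∈ I := by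
        have heq : (p : R) ^ j = (p : R) ^ (j - 1) * (p : R) := by
          rw [← pow_succ]; congr 1; omega
        rw [heq]; exact I.mul_mem_left _ hpI
      exact I.mul_mem_right _ (I.mul_mem_right _ (I.mul_mem_left _ hpw))
    · have hbw : b ^ (p - 1 - j) ∈ I := by
        have heq : b ^ (p - 1 - j) = b ^ (p - 1 - j - 1) * b := by
          rw [← pow_succ]; congr 1; omega
        rw [heq]; exact I.mul_mem_left _ hbI
      exact I.mul_mem_left _ hbw
  · rw [add_pow, Finset.sum_range_succ']
    have hsum : (∑ j ∈ Finset.range p,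
          ((p : R) * a) ^ (j + 1) * b ^ (p - (j + 1)) * (p.choose (j + 1) : R))
        = (p : R) * ∑ j ∈ Finset.range p,
          ((p.choose (j + 1) : R) * (p : R) ^ j * a ^ (j + 1)) * b ^ (p - 1 - j) := by
      rw [Finset.mul_sum]
      refine Finset.sum_congr rfl fun j hj => ?_
      have h1 : p - (j + 1) = p - 1 - j := by omega
      rw [h1, mul_pow, pow_succ]
      ring
    simp only [pow_zero, one_mul, Nat.sub_zero, Nat.choose_zero_right, Nat.cast_one, mul_one]
    linear_combination hsum

private lemma prod_X_pow_eq {R σT : Type*} [CommSemiring R] [DecidableEq σT]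
    (s : Finset σT) (k : ℕ) :
    (∏ i ∈ s, (X i : MvPolynomial σT R) ^ k)
      = monomial (∑ i ∈ s, Finsupp.single i k) 1 := by
  induction s using Finset.induction_on with
  | empty => simp
  | insert _ _ h ih =>
    rw [Finset.prod_insert h, Finset.sum_insert h, ih, X_pow_eq_monomial, monomial_mul, one_mul]

private noncomputable def vv (d m : ℕ) (i : Fin (d + 1)) :
    MvPolynomial (Fin (d + 1) ⊕ Fin (d + 1)) ℤ :=
  if (i : ℕ) ≤ m then 0 else X (Sum.inr i)

private noncomputable def uu (d m : ℕ) :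
    Fin (d + 1) ⊕ Fin (d + 1) → MvPolynomial (Fin (d + 1) ⊕ Fin (d + 1)) ℤ :=
  Sum.elim (fun i => X (Sum.inl i)) (vv d m)

private noncomputable def xxp (d p : ℕ) (i : Fin (d + 1)) :
    MvPolynomial (Fin (d + 1) ⊕ Fin (d + 1)) ℤ :=
  X (Sum.inl i) ^ p

private noncomputable def ww (d m p : ℕ) (i : Fin (d + 1)) :
    MvPolynomial (Fin (d + 1) ⊕ Fin (d + 1)) ℤ :=
  X (Sum.inl i) ^ p + (vv d m i - X (Sum.inl i)) ^ p

private noncomputable def rr (d : ℕ) :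
    Fin (d + 1) ⊕ Fin (d + 1) → MvPolynomial (Fin (d + 1)) (MvPolynomial (Fin (d + 1)) ℤ) :=
  Sum.elim (fun i => C (X i)) (fun i => X i + C (X i))

set_option maxHeartbeats 1000000 in
/-- (Ideal-theoretic contrapositive of the paper's Lemma 7.3, for
`f = g + p·h`.) Let `S = ℤ[x₀,…,x_d]` and `P = ℤ[x₀,…,x_d,y₀,…,y_d]` (variables of `P`
indexed by `Fin (d+1) ⊕ Fin (d+1)`, with `Sum.inl i` as `x_i` and `Sum.inr i` as
`y_i`). Suppose `f = g + p·h` where `g ∈ (x₀,…,x_m)S`, `m < d`, and `h` involves only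
the variables `x_{m+1},…,x_d`. If `G·∏(y_i − x_i)^k ∈ (p, f, f_y, (y_i − x_i)^{p+k})P`
for some `k`, then `g′·(x₀⋯x_m)^{k′} ∈ (p, f, x₀^{p+k′},…,x_m^{p+k′})S` for some `k′`;
here `p·G = Λ_p(f_y − f) − (f_y − f)^p` in `P` and `p·g′ = Λ_p(g) − g^p` in `S`. -/
theorem stmt_15 (p : ℕ) (hp : p.Prime) (d : ℕ) (hd : 1 ≤ d) (m : ℕ) (hm : m < d)
    (f g h : MvPolynomial (Fin (d + 1)) ℤ)
    (hfgh : f = g + (p : MvPolynomial (Fin (d + 1)) ℤ) * h)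
    (hg' : g ∈ Ideal.span
      ((fun i : Fin (d + 1) => (X i : MvPolynomial (Fin (d + 1)) ℤ)) ''
        {i : Fin (d + 1) | (i : ℕ) ≤ m}))
    (hh : h ∈ MvPolynomial.supported ℤ {i : Fin (d + 1) | m < (i : ℕ)})
    (Λ : MvPolynomial (Fin (d + 1) ⊕ Fin (d + 1)) ℤ →ₐ[ℤ]
         MvPolynomial (Fin (d + 1) ⊕ Fin (d + 1)) ℤ)
    (hΛ : Λ = aeval (fun j =>
      match j with
      | Sum.inl i => X (Sum.inl i) ^ p
      | Sum.inr i => X (Sum.inl i) ^ p + (X (Sum.inr i) - X (Sum.inl i)) ^ p))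
    (G : MvPolynomial (Fin (d + 1) ⊕ Fin (d + 1)) ℤ)
    (hG : (p : MvPolynomial (Fin (d + 1) ⊕ Fin (d + 1)) ℤ) * G
      = Λ (rename Sum.inr f - rename Sum.inl f)
        - (rename Sum.inr f - rename Sum.inl f) ^ p)
    (g' : MvPolynomial (Fin (d + 1)) ℤ)
    (hg'' : (p : MvPolynomial (Fin (d + 1)) ℤ) * g'
      = aeval (fun i : Fin (d + 1) => (X i : MvPolynomial (Fin (d + 1)) ℤ) ^ p) g - g ^ p)
    (hmem : ∃ k : ℕ,
      G * ∏ i : Fin (d + 1), (X (Sum.inr i) - X (Sum.inl i)) ^ k ∈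
        Ideal.span ({(p : MvPolynomial (Fin (d + 1) ⊕ Fin (d + 1)) ℤ),
            rename Sum.inl f, rename Sum.inr f} ∪
          Set.range fun i : Fin (d + 1) =>
            (X (Sum.inr i) - X (Sum.inl i) :
              MvPolynomial (Fin (d + 1) ⊕ Fin (d + 1)) ℤ) ^ (p + k))) :
    ∃ k' : ℕ,
      g' * (∏ i ∈ Finset.univ.filter (fun i : Fin (d + 1) => (i : ℕ) ≤ m), X i) ^ k' ∈
        Ideal.span ({(p : MvPolynomial (Fin (d + 1)) ℤ), f} ∪
          (fun i : Fin (d + 1) => (X i : MvPolynomial (Fin (d + 1)) ℤ) ^ (p + k')) ''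
            {i : Fin (d + 1) | (i : ℕ) ≤ m}) := by
  classical
  obtain ⟨k, hk⟩ := hmem
  refine ⟨k, ?_⟩
  have hp2 : 2 ≤ p := hp.two_le
  -- the ambient ring P
  let P := MvPolynomial (Fin (d + 1) ⊕ Fin (d + 1)) ℤ
  have hp0 : (p : MvPolynomial (Fin (d + 1) ⊕ Fin (d + 1)) ℤ) ≠ 0 :=
    Nat.cast_ne_zero.mpr hp.ne_zero
  obtain ⟨δ, hδ⟩ : ∃ δ : ℤ, ((-1 : ℤ) ^ p + 1) = (p : ℤ) * δ := by
    rcases hp.eq_two_or_odd' with h2 | hodd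
    · exact ⟨1, by subst h2; norm_num⟩
    · exact ⟨0, by rw [hodd.neg_one_pow]; ring⟩
  have hδP : ((-1 : MvPolynomial (Fin (d + 1) ⊕ Fin (d + 1)) ℤ) ^ p + 1)
      = (p : MvPolynomial (Fin (d + 1) ⊕ Fin (d + 1)) ℤ) * (δ : MvPolynomial (Fin (d + 1) ⊕ Fin (d + 1)) ℤ) := by
    have := congrArg (fun t : ℤ => (t : MvPolynomial (Fin (d + 1) ⊕ Fin (d + 1)) ℤ)) hδ
    push_cast at this
    exact this
  -- the specialization σ : y_i ↦ 0 (i ≤ m), y_i ↦ y_i (i > m)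
  let σ : MvPolynomial (Fin (d + 1) ⊕ Fin (d + 1)) ℤ →ₐ[ℤ]
      MvPolynomial (Fin (d + 1) ⊕ Fin (d + 1)) ℤ := aeval (uu d m)
  have hσinl : ∀ q : MvPolynomial (Fin (d + 1)) ℤ,
      σ (rename Sum.inl q) = rename Sum.inl q := by
    intro q
    show aeval (uu d m) (rename Sum.inl q) = _
    rw [aeval_rename]
    rw [← aeval_X_left_apply (rename Sum.inl q), aeval_rename]
    rfl
  have hσinr : ∀ q : MvPolynomial (Fin (d + 1)) ℤ,
      σ (rename Sum.inr q) = aeval (vv d m) q := by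
    intro q
    show aeval (uu d m) (rename Sum.inr q) = _
    rw [aeval_rename]
    rfl
  -- aeval (vv d m) kills g
  have hvg0 : aeval (vv d m) g = 0 := by
    have : aeval (vv d m) g ∈ (⊥ : Ideal (MvPolynomial (Fin (d + 1) ⊕ Fin (d + 1)) ℤ)) := by
      refine map_span_mem (aeval (vv d m)) hg' ?_
      rintro x ⟨i, hi, rfl⟩
      have hi' : (i : ℕ) ≤ m := hi
      simp only [aeval_X, Ideal.mem_bot]
      simp [vv, hi']
    simpa using this
  have hvf : aeval (vv d m) f
      = (p : MvPolynomial (Fin (d + 1) ⊕ Fin (d + 1)) ℤ) * aeval (vv d m) h := by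
    rw [hfgh, map_add, map_mul, map_natCast, hvg0]
    ring
  -- Λ computations
  have hΛinr : ∀ q : MvPolynomial (Fin (d + 1)) ℤ, Λ (rename Sum.inr q)
      = aeval (fun i : Fin (d + 1) =>
          (X (Sum.inl i) : MvPolynomial (Fin (d + 1) ⊕ Fin (d + 1)) ℤ) ^ p
            + (X (Sum.inr i) - X (Sum.inl i)) ^ p) q := by
    intro q
    rw [hΛ, aeval_rename]
    rfl
  have hΛinl : ∀ q : MvPolynomial (Fin (d + 1)) ℤ, Λ (rename Sum.inl q)
      = aeval (fun i : Fin (d + 1) =>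
          (X (Sum.inl i) : MvPolynomial (Fin (d + 1) ⊕ Fin (d + 1)) ℤ) ^ p) q := by
    intro q
    rw [hΛ, aeval_rename]
    rfl
  have hσΛinr : ∀ q : MvPolynomial (Fin (d + 1)) ℤ,
      σ (Λ (rename Sum.inr q)) = aeval (ww d m p) q := by
    intro q
    rw [hΛinr, comp_aeval_apply]
    have hfun : (fun i : Fin (d + 1) => σ ((X (Sum.inl i) : MvPolynomial (Fin (d + 1) ⊕ Fin (d + 1)) ℤ) ^ p + (X (Sum.inr i) - X (Sum.inl i)) ^ p)) = ww d m p := by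
      funext i
      show aeval (uu d m) _ = _
      simp only [map_add, map_pow, map_sub, aeval_X]
      rfl
    rw [hfun]
  have hσΛinl : ∀ q : MvPolynomial (Fin (d + 1)) ℤ,
      σ (Λ (rename Sum.inl q)) = aeval (xxp d p) q := by
    intro q
    rw [hΛinl, comp_aeval_apply]
    have hfun : (fun i : Fin (d + 1) => σ ((X (Sum.inl i) : MvPolynomial (Fin (d + 1) ⊕ Fin (d + 1)) ℤ) ^ p)) = xxp d p := by
      funext i
      show aeval (uu d m) _ = _
      simp only [map_pow, aeval_X]
      rfl
    rw [hfun]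
  -- notation
  set fx := rename (Sum.inl : Fin (d+1) → Fin (d+1) ⊕ Fin (d+1)) f with hfx
  set gx := rename (Sum.inl : Fin (d+1) → Fin (d+1) ⊕ Fin (d+1)) g with hgx
  set hx := rename (Sum.inl : Fin (d+1) → Fin (d+1) ⊕ Fin (d+1)) h with hhx
  set g'x := rename (Sum.inl : Fin (d+1) → Fin (d+1) ⊕ Fin (d+1)) g' with hg'x
  set h' := aeval (vv d m) h with hh'
  have hfgx : fx = gx + (p : MvPolynomial (Fin (d + 1) ⊕ Fin (d + 1)) ℤ) * hx := by
    rw [hfx, hgx, hhx, hfgh]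
    simp [map_add, map_mul, map_natCast]
  -- e1
  have e1 : (p : MvPolynomial (Fin (d + 1) ⊕ Fin (d + 1)) ℤ) * σ G
      = aeval (ww d m p) f - aeval (xxp d p) f
        - ((p : MvPolynomial (Fin (d + 1) ⊕ Fin (d + 1)) ℤ) * h' - fx) ^ p := by
    have hG' : (p : MvPolynomial (Fin (d + 1) ⊕ Fin (d + 1)) ℤ) * G
        = Λ (rename Sum.inr f) - Λ (rename Sum.inl f)
          - (rename Sum.inr f - rename Sum.inl f) ^ p := by
      rw [hG, map_sub]
    have := congrArg σ hG'
    simp only [map_mul, map_natCast, map_sub, map_pow] at this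
    rw [hσΛinr, hσΛinl, hσinr, hσinl] at this
    rw [this, hvf]
  -- e2
  have e2 : (p : MvPolynomial (Fin (d + 1) ⊕ Fin (d + 1)) ℤ) * g'x
      = aeval (xxp d p) g - gx ^ p := by
    have := congrArg (rename (Sum.inl : Fin (d+1) → Fin (d+1) ⊕ Fin (d+1))) hg''
    simp only [map_mul, map_natCast, map_sub, map_pow] at this
    rw [comp_aeval_apply] at this
    simp only [map_pow, rename_X] at this
    exact this
  -- e3, e4
  have e3 : aeval (ww d m p) f = aeval (ww d m p) g
      + (p : MvPolynomial (Fin (d + 1) ⊕ Fin (d + 1)) ℤ) * aeval (ww d m p) h := by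
    rw [hfgh]; simp [map_add, map_mul, map_natCast]
  have e4 : aeval (xxp d p) f = aeval (xxp d p) g
      + (p : MvPolynomial (Fin (d + 1) ⊕ Fin (d + 1)) ℤ) * aeval (xxp d p) h := by
    rw [hfgh]; simp [map_add, map_mul, map_natCast]
  -- e5 : aeval (ww) g = p * V with V in the span of the X (inl i)^p
  have e5gen : ∀ q ∈ Ideal.span
      ((fun i : Fin (d + 1) => (X i : MvPolynomial (Fin (d + 1)) ℤ)) ''
        {i : Fin (d + 1) | (i : ℕ) ≤ m}),
      ∃ V ∈ Ideal.span ((fun i : Fin (d + 1) =>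
          (X (Sum.inl i) : MvPolynomial (Fin (d + 1) ⊕ Fin (d + 1)) ℤ) ^ p) ''
          {i : Fin (d + 1) | (i : ℕ) ≤ m}),
        aeval (ww d m p) q = (p : MvPolynomial (Fin (d + 1) ⊕ Fin (d + 1)) ℤ) * V := by
    intro q hq
    induction hq using Submodule.span_induction with
    | mem x hxm =>
      obtain ⟨i, hi, rfl⟩ := hxm
      refine ⟨(δ : MvPolynomial (Fin (d + 1) ⊕ Fin (d + 1)) ℤ) * X (Sum.inl i) ^ p,
        Ideal.mul_mem_left _ _ (Ideal.subset_span ⟨i, hi, rfl⟩), ?_⟩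
      rw [aeval_X]
      have hvi : vv d m i = 0 := if_pos hi
      rw [ww, hvi, zero_sub, neg_pow]
      linear_combination (X (Sum.inl i) ^ p : MvPolynomial (Fin (d + 1) ⊕ Fin (d + 1)) ℤ) * hδP
    | zero => exact ⟨0, Ideal.zero_mem _, by simp⟩
    | add x y hxm hym ihx ihy =>
      obtain ⟨V₁, hV₁, hVe₁⟩ := ihx
      obtain ⟨V₂, hV₂, hVe₂⟩ := ihy
      exact ⟨V₁ + V₂, Ideal.add_mem _ hV₁ hV₂, by rw [map_add, hVe₁, hVe₂]; ring⟩
    | smul a x hxm ihx =>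
      obtain ⟨V₁, hV₁, hVe₁⟩ := ihx
      exact ⟨aeval (ww d m p) a * V₁, Ideal.mul_mem_left _ _ hV₁,
        by rw [smul_eq_mul, map_mul, hVe₁]; ring⟩
  obtain ⟨V, hV, e5⟩ := e5gen g hg'
  -- N : difference of the two evaluations of h
  have hNgen : ∀ q ∈ MvPolynomial.supported ℤ {i : Fin (d + 1) | m < (i : ℕ)},
      aeval (ww d m p) q - aeval (xxp d p) q ∈ Ideal.span
        ((fun i : Fin (d + 1) =>
          ((X (Sum.inr i) - X (Sum.inl i) : MvPolynomial (Fin (d + 1) ⊕ Fin (d + 1)) ℤ)) ^ p) ''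
          {i : Fin (d + 1) | m < (i : ℕ)}) := by
    intro q hq
    have hq' : q ∈ Algebra.adjoin ℤ
        ((X : Fin (d+1) → MvPolynomial (Fin (d+1)) ℤ) '' {i : Fin (d + 1) | m < (i : ℕ)}) := hq
    clear hq
    induction hq' using Algebra.adjoin_induction with
    | mem x hxm =>
      obtain ⟨i, hi, rfl⟩ := hxm
      have hvi : vv d m i = X (Sum.inr i) := if_neg (by simpa using Nat.not_le.mpr hi)
      rw [aeval_X, aeval_X, ww, xxp, hvi]
      have : X (Sum.inl i) ^ p + (X (Sum.inr i) - X (Sum.inl i)) ^ p - X (Sum.inl i) ^ p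
          = (X (Sum.inr i) - X (Sum.inl i) : MvPolynomial (Fin (d + 1) ⊕ Fin (d + 1)) ℤ) ^ p := by
        ring
      rw [this]
      exact Ideal.subset_span ⟨i, hi, rfl⟩
    | algebraMap r => simp
    | add x y hxm hym ihx ihy =>
      have : aeval (ww d m p) (x + y) - aeval (xxp d p) (x + y)
          = (aeval (ww d m p) x - aeval (xxp d p) x)
            + (aeval (ww d m p) y - aeval (xxp d p) y) := by
        simp only [map_add]; ring
      rw [this]; exact Ideal.add_mem _ ihx ihy
    | mul x y hxm hym ihx ihy =>
      have : aeval (ww d m p) (x * y) - aeval (xxp d p) (x * y)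
          = aeval (ww d m p) x * (aeval (ww d m p) y - aeval (xxp d p) y)
            + (aeval (ww d m p) x - aeval (xxp d p) x) * aeval (xxp d p) y := by
        simp only [map_mul]; ring
      rw [this]
      exact Ideal.add_mem _ (Ideal.mul_mem_left _ _ ihy) (Ideal.mul_mem_right _ _ ihx)
  have hN := hNgen h hh
  -- the ideal K₁
  set genK₁ : Set (MvPolynomial (Fin (d + 1) ⊕ Fin (d + 1)) ℤ) :=
    ({(p : MvPolynomial (Fin (d + 1) ⊕ Fin (d + 1)) ℤ), fx}
      ∪ (fun i : Fin (d + 1) =>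
          (X (Sum.inl i) : MvPolynomial (Fin (d + 1) ⊕ Fin (d + 1)) ℤ) ^ p) ''
          {i : Fin (d + 1) | (i : ℕ) ≤ m}
      ∪ (fun i : Fin (d + 1) =>
          ((X (Sum.inr i) - X (Sum.inl i) : MvPolynomial (Fin (d + 1) ⊕ Fin (d + 1)) ℤ)) ^ p) ''
          {i : Fin (d + 1) | m < (i : ℕ)}) with hgenK₁
  set K₁ : Ideal (MvPolynomial (Fin (d + 1) ⊕ Fin (d + 1)) ℤ) := Ideal.span genK₁ with hK₁
  have hpK₁ : (p : MvPolynomial (Fin (d + 1) ⊕ Fin (d + 1)) ℤ) ∈ K₁ :=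
    Ideal.subset_span (Or.inl (Or.inl (Set.mem_insert _ _)))
  have hfK₁ : fx ∈ K₁ :=
    Ideal.subset_span (Or.inl (Or.inl (Set.mem_insert_of_mem _ rfl)))
  have hVK₁ : V ∈ K₁ := by
    refine Ideal.span_mono ?_ hV
    intro t ht
    exact Or.inl (Or.inr ht)
  have hNK₁ : aeval (ww d m p) h - aeval (xxp d p) h ∈ K₁ := by
    refine Ideal.span_mono ?_ hN
    intro t ht
    exact Or.inr ht
  -- e6 : gx^p = fx^p + p*U
  obtain ⟨U, hU, hUeq⟩ := key_binom hp2 (-hx) fx hpK₁ hfK₁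
  have e6 : gx ^ p = fx ^ p + (p : MvPolynomial (Fin (d + 1) ⊕ Fin (d + 1)) ℤ) * U := by
    have hgeq : gx = (p : MvPolynomial (Fin (d + 1) ⊕ Fin (d + 1)) ℤ) * (-hx) + fx := by
      rw [hfgx]; ring
    rw [hgeq, hUeq]
  -- e7 : (p h' - fx)^p = (-1)^p fx^p + p*W
  obtain ⟨W, hW, hWeq⟩ := key_binom hp2 h' (-fx) hpK₁ (neg_mem hfK₁)
  have e7 : ((p : MvPolynomial (Fin (d + 1) ⊕ Fin (d + 1)) ℤ) * h' - fx) ^ p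
      = (-1 : MvPolynomial (Fin (d + 1) ⊕ Fin (d + 1)) ℤ) ^ p * fx ^ p
        + (p : MvPolynomial (Fin (d + 1) ⊕ Fin (d + 1)) ℤ) * W := by
    rw [sub_eq_add_neg, hWeq, neg_pow]
  -- the main cancellation
  set c : MvPolynomial (Fin (d + 1) ⊕ Fin (d + 1)) ℤ :=
    V + (aeval (ww d m p) h - aeval (xxp d p) h) - W - U
      - (δ : MvPolynomial (Fin (d + 1) ⊕ Fin (d + 1)) ℤ) * fx ^ p with hc
  have hcK₁ : c ∈ K₁ := by
    have hfp : fx ^ p ∈ K₁ := Ideal.pow_mem_of_mem _ hfK₁ p (by omega)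
    exact Ideal.sub_mem _ (Ideal.sub_mem _ (Ideal.sub_mem _
      (Ideal.add_mem _ hVK₁ hNK₁) hW) hU) (Ideal.mul_mem_left _ _ hfp)
  have hmul : (p : MvPolynomial (Fin (d + 1) ⊕ Fin (d + 1)) ℤ) * (σ G + g'x)
      = (p : MvPolynomial (Fin (d + 1) ⊕ Fin (d + 1)) ℤ) * c := by
    rw [hc]
    linear_combination e1 + e2 + e3 - e4 + e5 - e6 - e7 - (fx ^ p) * hδP
  have hceq : σ G + g'x = c := mul_left_cancel₀ hp0 hmul
  -- the ideal K (exponent p + k)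
  set genK : Set (MvPolynomial (Fin (d + 1) ⊕ Fin (d + 1)) ℤ) :=
    ({(p : MvPolynomial (Fin (d + 1) ⊕ Fin (d + 1)) ℤ), fx}
      ∪ (fun i : Fin (d + 1) =>
          (X (Sum.inl i) : MvPolynomial (Fin (d + 1) ⊕ Fin (d + 1)) ℤ) ^ (p + k)) ''
          {i : Fin (d + 1) | (i : ℕ) ≤ m}
      ∪ (fun i : Fin (d + 1) =>
          ((X (Sum.inr i) - X (Sum.inl i) : MvPolynomial (Fin (d + 1) ⊕ Fin (d + 1)) ℤ)) ^ (p + k)) ''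
          {i : Fin (d + 1) | m < (i : ℕ)}) with hgenK
  set K : Ideal (MvPolynomial (Fin (d + 1) ⊕ Fin (d + 1)) ℤ) := Ideal.span genK with hKdef
  have hpK : (p : MvPolynomial (Fin (d + 1) ⊕ Fin (d + 1)) ℤ) ∈ K :=
    Ideal.subset_span (Or.inl (Or.inl (Set.mem_insert _ _)))
  have hfK : fx ∈ K :=
    Ideal.subset_span (Or.inl (Or.inl (Set.mem_insert_of_mem _ rfl)))
  have hxK : ∀ i : Fin (d + 1), (i : ℕ) ≤ m →
      (X (Sum.inl i) : MvPolynomial (Fin (d + 1) ⊕ Fin (d + 1)) ℤ) ^ (p + k) ∈ K :=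
    fun i hi => Ideal.subset_span (Or.inl (Or.inr ⟨i, hi, rfl⟩))
  have hzK : ∀ i : Fin (d + 1), m < (i : ℕ) →
      ((X (Sum.inr i) - X (Sum.inl i) : MvPolynomial (Fin (d + 1) ⊕ Fin (d + 1)) ℤ)) ^ (p + k) ∈ K :=
    fun i hi => Ideal.subset_span (Or.inr ⟨i, hi, rfl⟩)
  -- image of the hypothesis under σ
  set M : MvPolynomial (Fin (d + 1) ⊕ Fin (d + 1)) ℤ :=
    ∏ i : Fin (d + 1), (vv d m i - X (Sum.inl i)) ^ k with hM
  have hσGM : σ G * M ∈ K := by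
    have hval : σ (G * ∏ i : Fin (d + 1), (X (Sum.inr i) - X (Sum.inl i)) ^ k)
        = σ G * M := by
      rw [map_mul, map_prod]
      congr 1
      refine Finset.prod_congr rfl fun i _ => ?_
      rw [map_pow, map_sub]
      congr 2
      · show aeval (uu d m) (X (Sum.inr i)) = vv d m i
        rw [aeval_X]; rfl
      · show aeval (uu d m) (X (Sum.inl i)) = X (Sum.inl i)
        rw [aeval_X]; rfl
    rw [← hval]
    refine map_span_mem σ hk ?_
    intro x hxm
    simp only [Set.mem_union, Set.mem_insert_iff, Set.mem_singleton_iff,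
      Set.mem_range] at hxm
    rcases hxm with (rfl | rfl | rfl) | ⟨i, rfl⟩
    · rw [map_natCast]; exact hpK
    · rw [hσinl]; exact hfK
    · rw [hσinr, hvf]
      exact Ideal.mul_mem_right _ _ hpK
    · rw [map_pow, map_sub]
      have h1 : σ (X (Sum.inr i)) = vv d m i := by
        show aeval (uu d m) (X (Sum.inr i)) = vv d m i
        rw [aeval_X]; rfl
      have h2 : σ (X (Sum.inl i)) = X (Sum.inl i) := by
        show aeval (uu d m) (X (Sum.inl i)) = X (Sum.inl i)
        rw [aeval_X]; rfl
      rw [h1, h2]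
      by_cases hi : (i : ℕ) ≤ m
      · have hvi : vv d m i = 0 := if_pos hi
        rw [hvi, zero_sub, neg_pow]
        exact Ideal.mul_mem_left _ _ (hxK i hi)
      · have hvi : vv d m i = X (Sum.inr i) := if_neg hi
        rw [hvi]
        exact hzK i (Nat.not_le.mp hi)
  -- K₁ * M ⊆ K
  have hK₁M : ∀ q ∈ K₁, q * M ∈ K := by
    intro q hq
    rw [hK₁] at hq
    induction hq using Submodule.span_induction with
    | mem x hxm =>
      rw [hgenK₁] at hxm
      rcases hxm with (hx2 | ⟨i, hi, rfl⟩) | ⟨i, hi, rfl⟩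
      · rcases hx2 with rfl | rfl
        · exact Ideal.mul_mem_right _ _ hpK
        · exact Ideal.mul_mem_right _ _ hfK
      · -- X (inl i)^p * M
        have hfac : M = (vv d m i - X (Sum.inl i)) ^ k
            * ∏ j ∈ Finset.univ.erase i, (vv d m j - X (Sum.inl j)) ^ k := by
          rw [hM, ← Finset.mul_prod_erase Finset.univ _ (Finset.mem_univ i)]
        have hvi : vv d m i = 0 := if_pos hi
        have : X (Sum.inl i) ^ p * M
            = ((-1 : MvPolynomial (Fin (d + 1) ⊕ Fin (d + 1)) ℤ) ^ k
                * ∏ j ∈ Finset.univ.erase i, (vv d m j - X (Sum.inl j)) ^ k)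
              * X (Sum.inl i) ^ (p + k) := by
          rw [hfac, hvi, zero_sub, neg_pow, pow_add]
          ring
        rw [this]
        exact Ideal.mul_mem_left _ _ (hxK i hi)
      · -- z_i^p * M
        have hfac : M = (vv d m i - X (Sum.inl i)) ^ k
            * ∏ j ∈ Finset.univ.erase i, (vv d m j - X (Sum.inl j)) ^ k := by
          rw [hM, ← Finset.mul_prod_erase Finset.univ _ (Finset.mem_univ i)]
        have hvi : vv d m i = X (Sum.inr i) := if_neg (by simpa using Nat.not_le.mpr hi)
        have : (X (Sum.inr i) - X (Sum.inl i)) ^ p * M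
            = (∏ j ∈ Finset.univ.erase i, (vv d m j - X (Sum.inl j)) ^ k)
              * (X (Sum.inr i) - X (Sum.inl i)) ^ (p + k) := by
          rw [hfac, hvi, pow_add]
          ring
        rw [this]
        exact Ideal.mul_mem_left _ _ (hzK i hi)
    | zero => simpa using K.zero_mem
    | add x y hxm hym ihx ihy => rw [add_mul]; exact K.add_mem ihx ihy
    | smul a x hxm ihx => rw [smul_eq_mul, mul_assoc]; exact K.mul_mem_left _ ihx
  -- conclude g'x * M ∈ K
  have hg'M : g'x * M ∈ K := by
    have h1 : (σ G + g'x) * M ∈ K := hK₁M _ (hceq ▸ hcK₁)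
    have h2 : g'x * M = (σ G + g'x) * M - σ G * M := by ring
    rw [h2]
    exact K.sub_mem h1 hσGM
  -- now push to MvPolynomial (Fin (d+1)) (MvPolynomial (Fin (d+1)) ℤ)
  let ρ : MvPolynomial (Fin (d + 1) ⊕ Fin (d + 1)) ℤ →ₐ[ℤ]
      MvPolynomial (Fin (d + 1)) (MvPolynomial (Fin (d + 1)) ℤ) := aeval (rr d)
  have hCq : ∀ q : MvPolynomial (Fin (d + 1)) ℤ,
      aeval (fun i : Fin (d + 1) => (C (X i) : MvPolynomial (Fin (d + 1)) (MvPolynomial (Fin (d + 1)) ℤ))) q = C q := by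
    intro q
    induction q using MvPolynomial.induction_on with
    | C a =>
      rw [aeval_C]
      rw [eq_intCast (C : ℤ →+* MvPolynomial (Fin (d + 1)) ℤ) a]
      rw [map_intCast (C : MvPolynomial (Fin (d + 1)) ℤ →+* MvPolynomial (Fin (d + 1)) (MvPolynomial (Fin (d + 1)) ℤ)) a]
      simp [algebraMap_int_eq, eq_intCast]
    | add q r hq hr => rw [map_add, hq, hr, map_add]
    | mul_X q i hq => rw [map_mul, hq, aeval_X, map_mul]
  have hρinl : ∀ q : MvPolynomial (Fin (d + 1)) ℤ, ρ (rename Sum.inl q) = C q := by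
    intro q
    show aeval (rr d) (rename Sum.inl q) = C q
    rw [aeval_rename]
    exact hCq q
  -- target ideal J in S
  set genJ : Set (MvPolynomial (Fin (d + 1)) ℤ) :=
    ({(p : MvPolynomial (Fin (d + 1)) ℤ), f}
      ∪ (fun i : Fin (d + 1) => (X i : MvPolynomial (Fin (d + 1)) ℤ) ^ (p + k)) ''
          {i : Fin (d + 1) | (i : ℕ) ≤ m}) with hgenJ
  set J : Ideal (MvPolynomial (Fin (d + 1)) ℤ) := Ideal.span genJ with hJ
  have hpJ : (p : MvPolynomial (Fin (d + 1)) ℤ) ∈ J :=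
    Ideal.subset_span (Or.inl (Set.mem_insert _ _))
  have hfJ : f ∈ J := Ideal.subset_span (Or.inl (Set.mem_insert_of_mem _ rfl))
  have hxJ : ∀ i : Fin (d + 1), (i : ℕ) ≤ m →
      (X i : MvPolynomial (Fin (d + 1)) ℤ) ^ (p + k) ∈ J :=
    fun i hi => Ideal.subset_span (Or.inr ⟨i, hi, rfl⟩)
  -- ideal L in T
  set genL : Set (MvPolynomial (Fin (d + 1)) (MvPolynomial (Fin (d + 1)) ℤ)) :=
    ({(p : MvPolynomial (Fin (d + 1)) (MvPolynomial (Fin (d + 1)) ℤ)), C f}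
      ∪ (fun i : Fin (d + 1) => (C ((X i : MvPolynomial (Fin (d + 1)) ℤ) ^ (p + k)) : MvPolynomial (Fin (d + 1)) (MvPolynomial (Fin (d + 1)) ℤ))) ''
          {i : Fin (d + 1) | (i : ℕ) ≤ m}
      ∪ (fun i : Fin (d + 1) => (X i : MvPolynomial (Fin (d + 1)) (MvPolynomial (Fin (d + 1)) ℤ)) ^ (p + k)) '' {i : Fin (d + 1) | m < (i : ℕ)}) with hgenL
  set L : Ideal (MvPolynomial (Fin (d + 1)) (MvPolynomial (Fin (d + 1)) ℤ)) := Ideal.span genL with hL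
  have hρK : ρ (g'x * M) ∈ L := by
    refine map_span_mem ρ hg'M ?_
    intro x hxm
    rw [hgenK] at hxm
    rcases hxm with (hx2 | ⟨i, hi, rfl⟩) | ⟨i, hi, rfl⟩
    · rcases hx2 with rfl | rfl
      · rw [map_natCast]
        exact Ideal.subset_span (Or.inl (Or.inl (Set.mem_insert _ _)))
      · rw [hρinl]
        exact Ideal.subset_span (Or.inl (Or.inl (Set.mem_insert_of_mem _ rfl)))
    · rw [map_pow]
      have : ρ (X (Sum.inl i)) = (C (X i) : MvPolynomial (Fin (d + 1)) (MvPolynomial (Fin (d + 1)) ℤ)) := by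
        show aeval (rr d) (X (Sum.inl i)) = _
        rw [aeval_X]; rfl
      rw [this, ← map_pow]
      exact Ideal.subset_span (Or.inl (Or.inr ⟨i, hi, rfl⟩))
    · rw [map_pow, map_sub]
      have h1 : ρ (X (Sum.inr i)) = (X i + C (X i) : MvPolynomial (Fin (d + 1)) (MvPolynomial (Fin (d + 1)) ℤ)) := by
        show aeval (rr d) (X (Sum.inr i)) = _
        rw [aeval_X]; rfl
      have h2 : ρ (X (Sum.inl i)) = (C (X i) : MvPolynomial (Fin (d + 1)) (MvPolynomial (Fin (d + 1)) ℤ)) := by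
        show aeval (rr d) (X (Sum.inl i)) = _
        rw [aeval_X]; rfl
      rw [h1, h2, add_sub_cancel_right]
      exact Ideal.subset_span (Or.inr ⟨i, hi, rfl⟩)
  -- compute ρ (g'x * M)
  set A : Finset (Fin (d + 1)) := Finset.univ.filter (fun i : Fin (d + 1) => (i : ℕ) ≤ m) with hA
  set B : Finset (Fin (d + 1)) := Finset.univ.filter (fun i : Fin (d + 1) => ¬ (i : ℕ) ≤ m) with hB
  set η : MvPolynomial (Fin (d + 1)) (MvPolynomial (Fin (d + 1)) ℤ) := ((-1 : MvPolynomial (Fin (d + 1)) (MvPolynomial (Fin (d + 1)) ℤ)) ^ k) ^ A.card with hη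
  set t : MvPolynomial (Fin (d + 1)) (MvPolynomial (Fin (d + 1)) ℤ) := C (g' * ∏ i ∈ A, (X i : MvPolynomial (Fin (d + 1)) ℤ) ^ k)
      * ∏ i ∈ B, (X i : MvPolynomial (Fin (d + 1)) (MvPolynomial (Fin (d + 1)) ℤ)) ^ k with htdef
  have hρval : ρ (g'x * M) = η * t := by
    rw [map_mul, hρinl]
    have hMval : ρ M = η * (C (∏ i ∈ A, (X i : MvPolynomial (Fin (d + 1)) ℤ) ^ k)
        * ∏ i ∈ B, (X i : MvPolynomial (Fin (d + 1)) (MvPolynomial (Fin (d + 1)) ℤ)) ^ k) := by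
      rw [hM, map_prod]
      have hfact : ∀ i : Fin (d + 1),
          ρ ((vv d m i - X (Sum.inl i)) ^ k)
            = if (i : ℕ) ≤ m then (-1 : MvPolynomial (Fin (d + 1)) (MvPolynomial (Fin (d + 1)) ℤ)) ^ k * (C (X i)) ^ k else (X i : MvPolynomial (Fin (d + 1)) (MvPolynomial (Fin (d + 1)) ℤ)) ^ k := by
        intro i
        rw [map_pow, map_sub]
        have h2 : ρ (X (Sum.inl i)) = (C (X i) : MvPolynomial (Fin (d + 1)) (MvPolynomial (Fin (d + 1)) ℤ)) := by
          show aeval (rr d) (X (Sum.inl i)) = _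
          rw [aeval_X]; rfl
        by_cases hi : (i : ℕ) ≤ m
        · have hvi : vv d m i = 0 := if_pos hi
          rw [hvi, map_zero, h2, zero_sub,
            neg_pow (C (X i) : MvPolynomial (Fin (d + 1)) (MvPolynomial (Fin (d + 1)) ℤ)) k,
            if_pos hi]
        · have hvi : vv d m i = X (Sum.inr i) := if_neg hi
          have h1 : ρ (X (Sum.inr i)) = (X i + C (X i) : MvPolynomial (Fin (d + 1)) (MvPolynomial (Fin (d + 1)) ℤ)) := by
            show aeval (rr d) (X (Sum.inr i)) = _
            rw [aeval_X]; rfl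
          rw [hvi, h1, h2, add_sub_cancel_right, if_neg hi]
      calc (∏ i : Fin (d + 1), ρ ((vv d m i - X (Sum.inl i)) ^ k))
          = (∏ i ∈ A, ((-1 : MvPolynomial (Fin (d + 1)) (MvPolynomial (Fin (d + 1)) ℤ)) ^ k * (C (X i)) ^ k)) * ∏ i ∈ B, (X i : MvPolynomial (Fin (d + 1)) (MvPolynomial (Fin (d + 1)) ℤ)) ^ k := by
            rw [← Finset.prod_filter_mul_prod_filter_not Finset.univ
              (fun i : Fin (d + 1) => (i : ℕ) ≤ m)]
            rw [← hA, ← hB]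
            congr 1
            · refine Finset.prod_congr rfl fun i hi => ?_
              rw [hfact i, if_pos (by simpa [hA] using hi)]
            · refine Finset.prod_congr rfl fun i hi => ?_
              rw [hfact i, if_neg (by simpa [hB] using hi)]
        _ = η * (C (∏ i ∈ A, (X i : MvPolynomial (Fin (d + 1)) ℤ) ^ k)
              * ∏ i ∈ B, (X i : MvPolynomial (Fin (d + 1)) (MvPolynomial (Fin (d + 1)) ℤ)) ^ k) := by
            rw [Finset.prod_mul_distrib, Finset.prod_const, map_prod]
            simp only [map_pow]
            rw [hη]
            ring
    rw [hMval, htdef, map_mul]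
    ring
  have hηη : η * η = 1 := by
    rw [hη, ← pow_mul, ← pow_add]
    have heven : Even (k * A.card + k * A.card) := ⟨k * A.card, rfl⟩
    exact Even.neg_one_pow (α := MvPolynomial (Fin (d + 1)) (MvPolynomial (Fin (d + 1)) ℤ)) heven
  have htL : t ∈ L := by
    have h1 : η * t ∈ L := by rw [← hρval]; exact hρK
    have h2 : t = η * (η * t) := by rw [← mul_assoc, hηη, one_mul]
    rw [h2]
    exact Ideal.mul_mem_left _ _ h1
  -- coefficient extraction
  set μ : Fin (d + 1) →₀ ℕ := ∑ i ∈ B, Finsupp.single i k with hμ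
  have hμi : ∀ i ∈ B, μ i = k := by
    intro i hi
    rw [hμ]
    rw [Finset.sum_apply']
    rw [Finset.sum_eq_single i (fun j _ hji => Finsupp.single_eq_of_ne' hji)
      (fun hni => absurd hi hni)]
    exact Finsupp.single_eq_same
  have hLcoeff : ∀ q ∈ L, coeff μ q ∈ J := by
    intro q hq
    rw [hL, Ideal.span] at hq
    obtain ⟨cc, hsupp, rfl⟩ := Submodule.mem_span_set.mp hq
    rw [Finsupp.sum, coeff_sum]
    refine Ideal.sum_mem _ fun mi hmi => ?_
    have hmem := hsupp hmi
    rw [hgenL] at hmem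
    rcases hmem with (hx2 | ⟨i, hi, rfl⟩) | ⟨i, hi, rfl⟩
    · rcases hx2 with rfl | rfl
      · have hCp : (C ((p : ℕ) : MvPolynomial (Fin (d + 1)) ℤ) : MvPolynomial (Fin (d + 1)) (MvPolynomial (Fin (d + 1)) ℤ)) = ((p : ℕ) : MvPolynomial (Fin (d + 1)) (MvPolynomial (Fin (d + 1)) ℤ)) :=
          map_natCast (C : MvPolynomial (Fin (d + 1)) ℤ →+* MvPolynomial (Fin (d + 1)) (MvPolynomial (Fin (d + 1)) ℤ)) p
        rw [smul_eq_mul, mul_comm, ← hCp, coeff_C_mul]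
        exact Ideal.mul_mem_right _ _ hpJ
      · rw [smul_eq_mul, mul_comm, coeff_C_mul]
        exact Ideal.mul_mem_right _ _ hfJ
    · rw [smul_eq_mul, mul_comm, coeff_C_mul]
      exact Ideal.mul_mem_right _ _ (hxJ i hi)
    · beta_reduce
      rw [smul_eq_mul, X_pow_eq_monomial, coeff_mul_monomial']
      rw [if_neg]
      · exact J.zero_mem
      · intro hle
        have h1 := Finsupp.single_le_iff.mp hle
        have h2 : μ i = k := hμi i (by
          rw [hB]
          exact Finset.mem_filter.mpr ⟨Finset.mem_univ _, Nat.not_le.mpr hi⟩)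
        omega
  have hfinal := hLcoeff t htL
  have hcoefft : coeff μ t = g' * ∏ i ∈ A, (X i : MvPolynomial (Fin (d + 1)) ℤ) ^ k := by
    rw [htdef, prod_X_pow_eq (R := MvPolynomial (Fin (d + 1)) ℤ) B k, ← hμ,
      coeff_C_mul, coeff_monomial, if_pos rfl, mul_one]
  rw [hcoefft] at hfinal
  rw [← Finset.prod_pow]
  exact hfinal
end

section
/- Let S = ℤ[x₁₁, x₁₂, x₁₃, x₂₂, x₂₃, x₃₃] be a polynomial ring and let X be the symmetric 3×3 matrix with entries X_{ii} = x_{ii} and X_{ij} = X_{ji} = x_{ij} for i < j. Set g := x₁₁x₂₂x₃₃ − x₁₁x₂₃² − x₂₂x₁₃² − x₃₃x₁₂², and let Λ₂ : S → S be the ℤ-algebra endomorphism squaring each indeterminate. Then for every G ∈ S with 2·G = Λ₂(g) − g² and every natural number k, the element G·(x₁₁x₂₂x₃₃)^k does NOT belong to the ideal of S generated by 2, det X, x₁₁^{2+k}, x₂₂^{2+k}, x₃₃^{2+k}. -/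
open MvPolynomial

/-- The generic symmetric `n × n` matrix, with entries the indeterminates `x_{ij}`
indexed by pairs `i ≤ j`. -/
noncomputable def symMat (n : ℕ) :
    Matrix (Fin n) (Fin n) (MvPolynomial {q : Fin n × Fin n // q.1 ≤ q.2} ℤ) :=
  Matrix.of fun i j =>
    if h : i ≤ j then X ⟨(i, j), h⟩ else X ⟨(j, i), le_of_not_ge h⟩

/-- The indeterminate `x_{ij}` (for `i ≤ j`) of the generic symmetric `3 × 3` matrix. -/
noncomputable def sv (i j : Fin 3) (h : i ≤ j) :
    MvPolynomial {q : Fin 3 × Fin 3 // q.1 ≤ q.2} ℤ :=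
  X ⟨(i, j), h⟩

noncomputable section Stmt16Aux

abbrev V : Type := {q : Fin 3 × Fin 3 // q.1 ≤ q.2}

def va : V := ⟨(0,0), by decide⟩
def vd : V := ⟨(0,1), by decide⟩
def ve : V := ⟨(0,2), by decide⟩
def vb : V := ⟨(1,1), by decide⟩
def vf : V := ⟨(1,2), by decide⟩
def vc : V := ⟨(2,2), by decide⟩

lemma Vcases (P : V → Prop) (h0 : P va) (h1 : P vd) (h2 : P ve) (h3 : P vb)
    (h4 : P vf) (h5 : P vc) : ∀ i, P i := by
  rintro ⟨⟨i1, i2⟩, hle⟩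
  fin_cases i1 <;> fin_cases i2 <;>
    first
      | exact h0 | exact h1 | exact h2 | exact h3 | exact h4 | exact h5
      | exact absurd hle (by decide)

def tab {α : Type*} (p0 p1 p2 p3 p4 p5 : α) : V → α := fun q =>
  match q.1.1.val, q.1.2.val with
  | 0, 0 => p0
  | 0, 1 => p1
  | 0, 2 => p2
  | 1, 1 => p3
  | 1, 2 => p4
  | _, _ => p5

section TabLemmas
variable {α : Type*} (p0 p1 p2 p3 p4 p5 : α)
@[simp] lemma tab_va : tab p0 p1 p2 p3 p4 p5 va = p0 := rfl
@[simp] lemma tab_vd : tab p0 p1 p2 p3 p4 p5 vd = p1 := rfl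
@[simp] lemma tab_ve : tab p0 p1 p2 p3 p4 p5 ve = p2 := rfl
@[simp] lemma tab_vb : tab p0 p1 p2 p3 p4 p5 vb = p3 := rfl
@[simp] lemma tab_vf : tab p0 p1 p2 p3 p4 p5 vf = p4 := rfl
@[simp] lemma tab_vc : tab p0 p1 p2 p3 p4 p5 vc = p5 := rfl
@[simp] lemma tab_00 (h) : tab p0 p1 p2 p3 p4 p5 ⟨((0:Fin 3),(0:Fin 3)), h⟩ = p0 := rfl
@[simp] lemma tab_01 (h) : tab p0 p1 p2 p3 p4 p5 ⟨((0:Fin 3),(1:Fin 3)), h⟩ = p1 := rfl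
@[simp] lemma tab_02 (h) : tab p0 p1 p2 p3 p4 p5 ⟨((0:Fin 3),(2:Fin 3)), h⟩ = p2 := rfl
@[simp] lemma tab_11 (h) : tab p0 p1 p2 p3 p4 p5 ⟨((1:Fin 3),(1:Fin 3)), h⟩ = p3 := rfl
@[simp] lemma tab_12 (h) : tab p0 p1 p2 p3 p4 p5 ⟨((1:Fin 3),(2:Fin 3)), h⟩ = p4 := rfl
@[simp] lemma tab_22 (h) : tab p0 p1 p2 p3 p4 p5 ⟨((2:Fin 3),(2:Fin 3)), h⟩ = p5 := rfl
end TabLemmas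

lemma sum_V (F : V → ℕ) : (∑ i, F i) = F va + F vd + F ve + F vb + F vf + F vc := by
  rw [show (Finset.univ : Finset V) = {va, vd, ve, vb, vf, vc} from by decide]
  rw [Finset.sum_insert (by decide), Finset.sum_insert (by decide),
    Finset.sum_insert (by decide), Finset.sum_insert (by decide),
    Finset.sum_insert (by decide), Finset.sum_singleton]
  ring

lemma prod_mono (τ : V → (Fin 4 →₀ ℕ)) (e : V →₀ ℕ) :
    (e.prod fun i n => (monomial (τ i) (1:ℤ)) ^ n)
      = monomial (e.sum fun i n => n • τ i) 1 := by
  induction e using Finsupp.induction with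
  | zero => simp
  | single_add a b f ha hb ih =>
      rw [Finsupp.prod_add_index' (by simp) (fun i m n => pow_add _ _ _),
        Finsupp.sum_add_index' (by simp) (fun i m n => add_smul m n (τ i)),
        Finsupp.prod_single_index (by simp), Finsupp.sum_single_index (by simp),
        ih, monomial_pow, one_pow, monomial_mul, one_mul]

lemma coeff_aeval_eq (τ : V → (Fin 4 →₀ ℕ)) (ν : Fin 4 →₀ ℕ) (e₀ : V →₀ ℕ)
    (h : ∀ e : V →₀ ℕ, (e.sum fun i n => n • τ i) = ν ↔ e = e₀)
    (q : MvPolynomial V ℤ) :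
    coeff ν (aeval (fun i => monomial (τ i) (1:ℤ)) q) = coeff e₀ q := by
  induction q using MvPolynomial.induction_on' with
  | add p q hp hq => rw [map_add, coeff_add, hp, hq, coeff_add]
  | monomial e c =>
      rw [aeval_monomial, prod_mono, algebraMap_eq, C_mul_monomial, mul_one,
        coeff_monomial, coeff_monomial]
      by_cases he : e = e₀
      · rw [if_pos ((h e).mpr he), if_pos he]
      · rw [if_neg (fun hh => he ((h e).mp hh)), if_neg he]

lemma sum_eval (τ : V → (Fin 4 →₀ ℕ)) (e : V →₀ ℕ) (j : Fin 4) :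
    (e.sum fun i n => n • τ i) j
      = e va * τ va j + e vd * τ vd j + e ve * τ ve j + e vb * τ vb j
        + e vf * τ vf j + e vc * τ vc j := by
  classical
  rw [Finsupp.sum_apply]
  have : (e.sum fun i n => (n • τ i) j) = e.sum fun i n => n * τ i j := by
    apply Finsupp.sum_congr
    intro i _
    simp [Finsupp.smul_apply]
  rw [this, Finsupp.sum_fintype _ _ (by simp), sum_V]

def sx (j : Fin 4) (n : ℕ) : Fin 4 →₀ ℕ := Finsupp.single j n

def tau0 : V → (Fin 4 →₀ ℕ) :=
  tab (sx 0 2) (sx 1 1 + sx 3 1) (sx 2 1 + sx 3 1) (sx 1 2) (sx 1 1 + sx 2 1) (sx 2 2)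
def tau1 : V → (Fin 4 →₀ ℕ) :=
  tab (sx 1 2) (sx 1 1 + sx 2 1) (sx 1 1 + sx 3 1) (sx 2 2) (sx 2 1 + sx 3 1) (sx 0 2)
def tau2 : V → (Fin 4 →₀ ℕ) :=
  tab (sx 2 2) (sx 2 1 + sx 3 1) (sx 1 1 + sx 2 1) (sx 0 2) (sx 1 1 + sx 3 1) (sx 1 2)

def nuB (k : ℕ) : Fin 4 →₀ ℕ := sx 0 (2*k) + sx 2 (2*k+4) + sx 3 4
def nuC (k : ℕ) : Fin 4 →₀ ℕ := sx 0 (2*k) + sx 1 (2*k+4) + sx 3 4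
def mu (k : ℕ) : Fin 4 →₀ ℕ := sx 0 (2*k) + sx 1 (2*k+4) + sx 2 (2*k+4) + sx 3 4

def e1 (k : ℕ) : V →₀ ℕ := Finsupp.single vb k + Finsupp.single vc k + Finsupp.single vf 4
def e2 (k : ℕ) : V →₀ ℕ := Finsupp.single va k + Finsupp.single vc k + Finsupp.single ve 4
def e3 (k : ℕ) : V →₀ ℕ := Finsupp.single va k + Finsupp.single vb k + Finsupp.single vd 4

lemma uniq1 (k : ℕ) (e : V →₀ ℕ) :
    (e.sum fun i n => n • tau1 i) = nuB k ↔ e = e1 k := by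
  have E : ∀ i, e1 k i = (if vb = i then k else 0) + (if vc = i then k else 0)
      + (if vf = i then 4 else 0) := by
    intro i
    simp [e1, Finsupp.single_apply]
  constructor
  · intro hs
    have key : ∀ j : Fin 4, (e va * tau1 va j + e vd * tau1 vd j + e ve * tau1 ve j
        + e vb * tau1 vb j + e vf * tau1 vf j + e vc * tau1 vc j) = nuB k j := by
      intro j; rw [← sum_eval tau1 e j, hs]
    have h0 := key 0
    have h1 := key 1
    have h2 := key 2
    have h3 := key 3
    simp [tau1, nuB, sx, Finsupp.single_apply] at h0 h1 h2 h3
    refine Finsupp.ext (Vcases _ ?_ ?_ ?_ ?_ ?_ ?_) <;>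
      rw [E] <;>
      simp (config := { decide := true }) only [reduceIte] <;>
      omega
  · rintro rfl
    ext j
    rw [sum_eval tau1]
    have E1 := E va
    have E2 := E vd
    have E3 := E ve
    have E4 := E vb
    have E5 := E vf
    have E6 := E vc
    simp (config := { decide := true }) only [reduceIte] at E1 E2 E3 E4 E5 E6
    rw [E1, E2, E3, E4, E5, E6]
    fin_cases j <;>
      simp [tau1, nuB, sx, Finsupp.single_apply] <;> omega

lemma uniq2 (k : ℕ) (e : V →₀ ℕ) :
    (e.sum fun i n => n • tau2 i) = nuC k ↔ e = e1 k := by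
  have E : ∀ i, e1 k i = (if vb = i then k else 0) + (if vc = i then k else 0)
      + (if vf = i then 4 else 0) := by
    intro i
    simp [e1, Finsupp.single_apply]
  constructor
  · intro hs
    have key : ∀ j : Fin 4, (e va * tau2 va j + e vd * tau2 vd j + e ve * tau2 ve j
        + e vb * tau2 vb j + e vf * tau2 vf j + e vc * tau2 vc j) = nuC k j := by
      intro j; rw [← sum_eval tau2 e j, hs]
    have h0 := key 0
    have h1 := key 1
    have h2 := key 2
    have h3 := key 3
    simp [tau2, nuC, sx, Finsupp.single_apply] at h0 h1 h2 h3
    refine Finsupp.ext (Vcases _ ?_ ?_ ?_ ?_ ?_ ?_) <;>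
      rw [E] <;>
      simp (config := { decide := true }) only [reduceIte] <;>
      omega
  · rintro rfl
    ext j
    rw [sum_eval tau2]
    have E1 := E va
    have E2 := E vd
    have E3 := E ve
    have E4 := E vb
    have E5 := E vf
    have E6 := E vc
    simp (config := { decide := true }) only [reduceIte] at E1 E2 E3 E4 E5 E6
    rw [E1, E2, E3, E4, E5, E6]
    fin_cases j <;>
      simp [tau2, nuC, sx, Finsupp.single_apply] <;> omega

lemma uniq3 (k : ℕ) (e : V →₀ ℕ) :
    (e.sum fun i n => n • tau0 i) = nuB k ↔ e = e2 k := by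
  have E : ∀ i, e2 k i = (if va = i then k else 0) + (if vc = i then k else 0)
      + (if ve = i then 4 else 0) := by
    intro i
    simp [e2, Finsupp.single_apply]
  constructor
  · intro hs
    have key : ∀ j : Fin 4, (e va * tau0 va j + e vd * tau0 vd j + e ve * tau0 ve j
        + e vb * tau0 vb j + e vf * tau0 vf j + e vc * tau0 vc j) = nuB k j := by
      intro j; rw [← sum_eval tau0 e j, hs]
    have h0 := key 0
    have h1 := key 1
    have h2 := key 2
    have h3 := key 3
    simp [tau0, nuB, sx, Finsupp.single_apply] at h0 h1 h2 h3
    refine Finsupp.ext (Vcases _ ?_ ?_ ?_ ?_ ?_ ?_) <;>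
      rw [E] <;>
      simp (config := { decide := true }) only [reduceIte] <;>
      omega
  · rintro rfl
    ext j
    rw [sum_eval tau0]
    have E1 := E va
    have E2 := E vd
    have E3 := E ve
    have E4 := E vb
    have E5 := E vf
    have E6 := E vc
    simp (config := { decide := true }) only [reduceIte] at E1 E2 E3 E4 E5 E6
    rw [E1, E2, E3, E4, E5, E6]
    fin_cases j <;>
      simp [tau0, nuB, sx, Finsupp.single_apply] <;> omega

lemma uniq4 (k : ℕ) (e : V →₀ ℕ) :
    (e.sum fun i n => n • tau1 i) = nuC k ↔ e = e2 k := by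
  have E : ∀ i, e2 k i = (if va = i then k else 0) + (if vc = i then k else 0)
      + (if ve = i then 4 else 0) := by
    intro i
    simp [e2, Finsupp.single_apply]
  constructor
  · intro hs
    have key : ∀ j : Fin 4, (e va * tau1 va j + e vd * tau1 vd j + e ve * tau1 ve j
        + e vb * tau1 vb j + e vf * tau1 vf j + e vc * tau1 vc j) = nuC k j := by
      intro j; rw [← sum_eval tau1 e j, hs]
    have h0 := key 0
    have h1 := key 1
    have h2 := key 2
    have h3 := key 3
    simp [tau1, nuC, sx, Finsupp.single_apply] at h0 h1 h2 h3
    refine Finsupp.ext (Vcases _ ?_ ?_ ?_ ?_ ?_ ?_) <;>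
      rw [E] <;>
      simp (config := { decide := true }) only [reduceIte] <;>
      omega
  · rintro rfl
    ext j
    rw [sum_eval tau1]
    have E1 := E va
    have E2 := E vd
    have E3 := E ve
    have E4 := E vb
    have E5 := E vf
    have E6 := E vc
    simp (config := { decide := true }) only [reduceIte] at E1 E2 E3 E4 E5 E6
    rw [E1, E2, E3, E4, E5, E6]
    fin_cases j <;>
      simp [tau1, nuC, sx, Finsupp.single_apply] <;> omega

lemma uniq5 (k : ℕ) (e : V →₀ ℕ) :
    (e.sum fun i n => n • tau0 i) = nuC k ↔ e = e3 k := by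
  have E : ∀ i, e3 k i = (if va = i then k else 0) + (if vb = i then k else 0)
      + (if vd = i then 4 else 0) := by
    intro i
    simp [e3, Finsupp.single_apply]
  constructor
  · intro hs
    have key : ∀ j : Fin 4, (e va * tau0 va j + e vd * tau0 vd j + e ve * tau0 ve j
        + e vb * tau0 vb j + e vf * tau0 vf j + e vc * tau0 vc j) = nuC k j := by
      intro j; rw [← sum_eval tau0 e j, hs]
    have h0 := key 0
    have h1 := key 1
    have h2 := key 2
    have h3 := key 3
    simp [tau0, nuC, sx, Finsupp.single_apply] at h0 h1 h2 h3
    refine Finsupp.ext (Vcases _ ?_ ?_ ?_ ?_ ?_ ?_) <;>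
      rw [E] <;>
      simp (config := { decide := true }) only [reduceIte] <;>
      omega
  · rintro rfl
    ext j
    rw [sum_eval tau0]
    have E1 := E va
    have E2 := E vd
    have E3 := E ve
    have E4 := E vb
    have E5 := E vf
    have E6 := E vc
    simp (config := { decide := true }) only [reduceIte] at E1 E2 E3 E4 E5 E6
    rw [E1, E2, E3, E4, E5, E6]
    fin_cases j <;>
      simp [tau0, nuC, sx, Finsupp.single_apply] <;> omega

lemma uniq6 (k : ℕ) (e : V →₀ ℕ) :
    (e.sum fun i n => n • tau2 i) = nuB k ↔ e = e3 k := by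
  have E : ∀ i, e3 k i = (if va = i then k else 0) + (if vb = i then k else 0)
      + (if vd = i then 4 else 0) := by
    intro i
    simp [e3, Finsupp.single_apply]
  constructor
  · intro hs
    have key : ∀ j : Fin 4, (e va * tau2 va j + e vd * tau2 vd j + e ve * tau2 ve j
        + e vb * tau2 vb j + e vf * tau2 vf j + e vc * tau2 vc j) = nuB k j := by
      intro j; rw [← sum_eval tau2 e j, hs]
    have h0 := key 0
    have h1 := key 1
    have h2 := key 2
    have h3 := key 3
    simp [tau2, nuB, sx, Finsupp.single_apply] at h0 h1 h2 h3
    refine Finsupp.ext (Vcases _ ?_ ?_ ?_ ?_ ?_ ?_) <;>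
      rw [E] <;>
      simp (config := { decide := true }) only [reduceIte] <;>
      omega
  · rintro rfl
    ext j
    rw [sum_eval tau2]
    have E1 := E va
    have E2 := E vd
    have E3 := E ve
    have E4 := E vb
    have E5 := E vf
    have E6 := E vc
    simp (config := { decide := true }) only [reduceIte] at E1 E2 E3 E4 E5 E6
    rw [E1, E2, E3, E4, E5, E6]
    fin_cases j <;>
      simp [tau2, nuB, sx, Finsupp.single_apply] <;> omega


def tbl0 : V → MvPolynomial (Fin 4) ℤ := fun i => monomial (tau0 i) 1
def tbl1 : V → MvPolynomial (Fin 4) ℤ := fun i => monomial (tau1 i) 1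
def tbl2 : V → MvPolynomial (Fin 4) ℤ := fun i => monomial (tau2 i) 1

lemma mono_sq (j : Fin 4) : (monomial (sx j 2) (1:ℤ)) = X j ^ 2 := by
  rw [X_pow_eq_monomial, sx]

lemma mono_mul (i j : Fin 4) : (monomial (sx i 1 + sx j 1) (1:ℤ)) = X i * X j := by
  rw [X, X, monomial_mul, one_mul, sx, sx]

-- images of the six variables
lemma tbl0_va : tbl0 va = X 0 ^ 2 := by rw [tbl0, tau0, tab_va, mono_sq]
lemma tbl0_vd : tbl0 vd = X 1 * X 3 := by rw [tbl0, tau0, tab_vd, mono_mul]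
lemma tbl0_ve : tbl0 ve = X 2 * X 3 := by rw [tbl0, tau0, tab_ve, mono_mul]
lemma tbl0_vb : tbl0 vb = X 1 ^ 2 := by rw [tbl0, tau0, tab_vb, mono_sq]
lemma tbl0_vf : tbl0 vf = X 1 * X 2 := by rw [tbl0, tau0, tab_vf, mono_mul]
lemma tbl0_vc : tbl0 vc = X 2 ^ 2 := by rw [tbl0, tau0, tab_vc, mono_sq]

lemma tbl1_va : tbl1 va = X 1 ^ 2 := by rw [tbl1, tau1, tab_va, mono_sq]
lemma tbl1_vd : tbl1 vd = X 1 * X 2 := by rw [tbl1, tau1, tab_vd, mono_mul]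
lemma tbl1_ve : tbl1 ve = X 1 * X 3 := by rw [tbl1, tau1, tab_ve, mono_mul]
lemma tbl1_vb : tbl1 vb = X 2 ^ 2 := by rw [tbl1, tau1, tab_vb, mono_sq]
lemma tbl1_vf : tbl1 vf = X 2 * X 3 := by rw [tbl1, tau1, tab_vf, mono_mul]
lemma tbl1_vc : tbl1 vc = X 0 ^ 2 := by rw [tbl1, tau1, tab_vc, mono_sq]

lemma tbl2_va : tbl2 va = X 2 ^ 2 := by rw [tbl2, tau2, tab_va, mono_sq]
lemma tbl2_vd : tbl2 vd = X 2 * X 3 := by rw [tbl2, tau2, tab_vd, mono_mul]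
lemma tbl2_ve : tbl2 ve = X 1 * X 2 := by rw [tbl2, tau2, tab_ve, mono_mul]
lemma tbl2_vb : tbl2 vb = X 0 ^ 2 := by rw [tbl2, tau2, tab_vb, mono_sq]
lemma tbl2_vf : tbl2 vf = X 1 * X 3 := by rw [tbl2, tau2, tab_vf, mono_mul]
lemma tbl2_vc : tbl2 vc = X 1 ^ 2 := by rw [tbl2, tau2, tab_vc, mono_sq]

-- the determinant of the generic symmetric matrix, in terms of our variables
lemma det_eq : (symMat 3).det
    = X va * X vb * X vc - X va * X vf ^ 2 - X vb * X ve ^ 2 - X vc * X vd ^ 2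
      + 2 * X vd * X ve * X vf := by
  have s00 : symMat 3 0 0 = X va := rfl
  have s01 : symMat 3 0 1 = X vd := rfl
  have s02 : symMat 3 0 2 = X ve := rfl
  have s10 : symMat 3 1 0 = X vd := rfl
  have s11 : symMat 3 1 1 = X vb := rfl
  have s12 : symMat 3 1 2 = X vf := rfl
  have s20 : symMat 3 2 0 = X ve := rfl
  have s21 : symMat 3 2 1 = X vf := rfl
  have s22 : symMat 3 2 2 = X vc := rfl
  rw [Matrix.det_fin_three, s00, s01, s02, s10, s11, s12, s20, s21, s22]
  ring

lemma psi_det (tbl : V → MvPolynomial (Fin 4) ℤ)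
    (h : aeval tbl ((symMat 3).det) = 0) : True := trivial

lemma psi0_det : aeval tbl0 ((symMat 3).det) = 0 := by
  rw [det_eq]
  simp only [map_add, map_sub, map_mul, map_pow, aeval_X, map_ofNat,
    tbl0_va, tbl0_vb, tbl0_vc, tbl0_vd, tbl0_ve, tbl0_vf]
  ring

lemma psi1_det : aeval tbl1 ((symMat 3).det) = 0 := by
  rw [det_eq]
  simp only [map_add, map_sub, map_mul, map_pow, aeval_X, map_ofNat,
    tbl1_va, tbl1_vb, tbl1_vc, tbl1_vd, tbl1_ve, tbl1_vf]
  ring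

lemma psi2_det : aeval tbl2 ((symMat 3).det) = 0 := by
  rw [det_eq]
  simp only [map_add, map_sub, map_mul, map_pow, aeval_X, map_ofNat,
    tbl2_va, tbl2_vb, tbl2_vc, tbl2_vd, tbl2_ve, tbl2_vf]
  ring

def m1 : MvPolynomial V ℤ := X va * X vb * X vc
def m2 : MvPolynomial V ℤ := X va * X vf ^ 2
def m3 : MvPolynomial V ℤ := X vb * X ve ^ 2
def m4 : MvPolynomial V ℤ := X vc * X vd ^ 2

def G0 : MvPolynomial V ℤ :=
  m1*m2 + m1*m3 + m1*m4 - m2^2 - m3^2 - m4^2 - m2*m3 - m2*m4 - m3*m4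

lemma sv_00 (h) : sv 0 0 h = X va := rfl
lemma sv_11 (h) : sv 1 1 h = X vb := rfl
lemma sv_22 (h) : sv 2 2 h = X vc := rfl
lemma sv_01 (h) : sv 0 1 h = X vd := rfl
lemma sv_02 (h) : sv 0 2 h = X ve := rfl
lemma sv_12 (h) : sv 1 2 h = X vf := rfl

lemma G0_spec (g : MvPolynomial V ℤ)
    (hg : g = sv 0 0 (by decide) * sv 1 1 (by decide) * sv 2 2 (by decide)
      - sv 0 0 (by decide) * sv 1 2 (by decide) ^ 2
      - sv 1 1 (by decide) * sv 0 2 (by decide) ^ 2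
      - sv 2 2 (by decide) * sv 0 1 (by decide) ^ 2) :
    aeval (fun q : V => X q ^ 2) g - g ^ 2 = 2 * G0 := by
  rw [hg, sv_00, sv_11, sv_22, sv_01, sv_02, sv_12]
  simp only [map_sub, map_mul, map_pow, aeval_X]
  rw [G0, m1, m2, m3, m4]
  ring

-- evaluations of G0 and m1
lemma psi0_G0 : aeval tbl0 G0 = -3 * (X 1 ^ 4 * X 2 ^ 4 * X 3 ^ 4) := by
  simp only [G0, m1, m2, m3, m4, map_add, map_sub, map_mul, map_pow, aeval_X,
    tbl0_va, tbl0_vb, tbl0_vc, tbl0_vd, tbl0_ve, tbl0_vf]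
  ring

lemma psi1_G0 : aeval tbl1 G0 = -3 * (X 1 ^ 4 * X 2 ^ 4 * X 3 ^ 4) := by
  simp only [G0, m1, m2, m3, m4, map_add, map_sub, map_mul, map_pow, aeval_X,
    tbl1_va, tbl1_vb, tbl1_vc, tbl1_vd, tbl1_ve, tbl1_vf]
  ring

lemma psi2_G0 : aeval tbl2 G0 = -3 * (X 1 ^ 4 * X 2 ^ 4 * X 3 ^ 4) := by
  simp only [G0, m1, m2, m3, m4, map_add, map_sub, map_mul, map_pow, aeval_X,
    tbl2_va, tbl2_vb, tbl2_vc, tbl2_vd, tbl2_ve, tbl2_vf]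
  ring

lemma psi0_m1 : aeval tbl0 m1 = X 0 ^ 2 * X 1 ^ 2 * X 2 ^ 2 := by
  simp only [m1, map_mul, aeval_X, tbl0_va, tbl0_vb, tbl0_vc]

lemma psi1_m1 : aeval tbl1 m1 = X 0 ^ 2 * X 1 ^ 2 * X 2 ^ 2 := by
  simp only [m1, map_mul, aeval_X, tbl1_va, tbl1_vb, tbl1_vc]
  ring

lemma psi2_m1 : aeval tbl2 m1 = X 0 ^ 2 * X 1 ^ 2 * X 2 ^ 2 := by
  simp only [m1, map_mul, aeval_X, tbl2_va, tbl2_vb, tbl2_vc]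
  ring

lemma coeff_helper (k : ℕ) :
    coeff (mu k) ((-3 : MvPolynomial (Fin 4) ℤ) * (X 1 ^ 4 * X 2 ^ 4 * X 3 ^ 4)
      * (X 0 ^ 2 * X 1 ^ 2 * X 2 ^ 2) ^ k) = -3 := by
  have h3 : (-3 : MvPolynomial (Fin 4) ℤ) = C (-3 : ℤ) := by norm_num
  have hexp : (X 0 ^ 2 * X 1 ^ 2 * X 2 ^ 2 : MvPolynomial (Fin 4) ℤ) ^ k
      = X 0 ^ (2*k) * X 1 ^ (2*k) * X 2 ^ (2*k) := by
    rw [mul_pow, mul_pow, ← pow_mul, ← pow_mul, ← pow_mul]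
  rw [h3, hexp]
  rw [X_pow_eq_monomial, X_pow_eq_monomial, X_pow_eq_monomial, X_pow_eq_monomial,
    X_pow_eq_monomial, X_pow_eq_monomial]
  simp only [monomial_mul, C_mul_monomial, one_mul, mul_one]
  rw [coeff_monomial, if_pos]
  ext j
  fin_cases j <;> (simp [mu, sx, Finsupp.single_apply]; try omega)


def Lf (k : ℕ) (p : MvPolynomial V ℤ) : ℤ :=
  coeff (mu k) (aeval tbl0 p) + coeff (mu k) (aeval tbl1 p) + coeff (mu k) (aeval tbl2 p)

lemma Lf_add (k : ℕ) (p q : MvPolynomial V ℤ) : Lf k (p + q) = Lf k p + Lf k q := by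
  simp only [Lf, map_add, coeff_add]
  ring

lemma Lf_two (k : ℕ) (q : MvPolynomial V ℤ) : Lf k (q * 2) = 2 * Lf k q := by
  rw [mul_two, Lf_add]
  ring

lemma Lf_det (k : ℕ) (q : MvPolynomial V ℤ) : Lf k (q * (symMat 3).det) = 0 := by
  simp only [Lf, map_mul, psi0_det, psi1_det, psi2_det, mul_zero, coeff_zero]
  ring

lemma mu_app0 (k : ℕ) : mu k 0 = 2*k := by simp [mu, sx, Finsupp.single_apply]
lemma mu_app1 (k : ℕ) : mu k 1 = 2*k+4 := by simp [mu, sx, Finsupp.single_apply]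
lemma mu_app2 (k : ℕ) : mu k 2 = 2*k+4 := by simp [mu, sx, Finsupp.single_apply]

lemma Lf_A (k : ℕ) (q : MvPolynomial V ℤ) :
    Lf k (q * X va ^ (2+k)) = 2 * coeff (e1 k) q := by
  have h0 : aeval tbl0 (X va ^ (2+k) : MvPolynomial V ℤ)
      = monomial (Finsupp.single 0 (2*(2+k))) (1:ℤ) := by
    rw [map_pow, aeval_X, tbl0_va, ← pow_mul, X_pow_eq_monomial]
  have h1 : aeval tbl1 (X va ^ (2+k) : MvPolynomial V ℤ)
      = monomial (Finsupp.single 1 (2*(2+k))) (1:ℤ) := by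
    rw [map_pow, aeval_X, tbl1_va, ← pow_mul, X_pow_eq_monomial]
  have h2 : aeval tbl2 (X va ^ (2+k) : MvPolynomial V ℤ)
      = monomial (Finsupp.single 2 (2*(2+k))) (1:ℤ) := by
    rw [map_pow, aeval_X, tbl2_va, ← pow_mul, X_pow_eq_monomial]
  have t0 : coeff (mu k) (aeval tbl0 (q * X va ^ (2+k))) = 0 := by
    rw [map_mul, h0, coeff_mul_monomial',
      if_neg (by rw [Finsupp.single_le_iff, mu_app0]; omega)]
  have t1 : coeff (mu k) (aeval tbl1 (q * X va ^ (2+k))) = coeff (e1 k) q := by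
    rw [map_mul, h1, coeff_mul_monomial',
      if_pos (by rw [Finsupp.single_le_iff, mu_app1]; omega), mul_one]
    have hd : mu k - Finsupp.single 1 (2*(2+k)) = nuB k := by
      ext j
      fin_cases j <;>
        (simp [mu, nuB, sx, Finsupp.tsub_apply, Finsupp.single_apply]; try omega)
    rw [hd, show tbl1 = (fun i => monomial (tau1 i) (1:ℤ)) from rfl,
      coeff_aeval_eq tau1 (nuB k) (e1 k) (uniq1 k) q]
  have t2 : coeff (mu k) (aeval tbl2 (q * X va ^ (2+k))) = coeff (e1 k) q := by
    rw [map_mul, h2, coeff_mul_monomial',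
      if_pos (by rw [Finsupp.single_le_iff, mu_app2]; omega), mul_one]
    have hd : mu k - Finsupp.single 2 (2*(2+k)) = nuC k := by
      ext j
      fin_cases j <;>
        (simp [mu, nuC, sx, Finsupp.tsub_apply, Finsupp.single_apply]; try omega)
    rw [hd, show tbl2 = (fun i => monomial (tau2 i) (1:ℤ)) from rfl,
      coeff_aeval_eq tau2 (nuC k) (e1 k) (uniq2 k) q]
  rw [Lf, t0, t1, t2]
  ring

lemma Lf_B (k : ℕ) (q : MvPolynomial V ℤ) :
    Lf k (q * X vb ^ (2+k)) = 2 * coeff (e2 k) q := by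
  have h0 : aeval tbl0 (X vb ^ (2+k) : MvPolynomial V ℤ)
      = monomial (Finsupp.single 1 (2*(2+k))) (1:ℤ) := by
    rw [map_pow, aeval_X, tbl0_vb, ← pow_mul, X_pow_eq_monomial]
  have h1 : aeval tbl1 (X vb ^ (2+k) : MvPolynomial V ℤ)
      = monomial (Finsupp.single 2 (2*(2+k))) (1:ℤ) := by
    rw [map_pow, aeval_X, tbl1_vb, ← pow_mul, X_pow_eq_monomial]
  have h2 : aeval tbl2 (X vb ^ (2+k) : MvPolynomial V ℤ)
      = monomial (Finsupp.single 0 (2*(2+k))) (1:ℤ) := by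
    rw [map_pow, aeval_X, tbl2_vb, ← pow_mul, X_pow_eq_monomial]
  have t0 : coeff (mu k) (aeval tbl0 (q * X vb ^ (2+k))) = coeff (e2 k) q := by
    rw [map_mul, h0, coeff_mul_monomial',
      if_pos (by rw [Finsupp.single_le_iff, mu_app1]; omega), mul_one]
    have hd : mu k - Finsupp.single 1 (2*(2+k)) = nuB k := by
      ext j
      fin_cases j <;>
        (simp [mu, nuB, sx, Finsupp.tsub_apply, Finsupp.single_apply]; try omega)
    rw [hd, show tbl0 = (fun i => monomial (tau0 i) (1:ℤ)) from rfl,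
      coeff_aeval_eq tau0 (nuB k) (e2 k) (uniq3 k) q]
  have t1 : coeff (mu k) (aeval tbl1 (q * X vb ^ (2+k))) = coeff (e2 k) q := by
    rw [map_mul, h1, coeff_mul_monomial',
      if_pos (by rw [Finsupp.single_le_iff, mu_app2]; omega), mul_one]
    have hd : mu k - Finsupp.single 2 (2*(2+k)) = nuC k := by
      ext j
      fin_cases j <;>
        (simp [mu, nuC, sx, Finsupp.tsub_apply, Finsupp.single_apply]; try omega)
    rw [hd, show tbl1 = (fun i => monomial (tau1 i) (1:ℤ)) from rfl,
      coeff_aeval_eq tau1 (nuC k) (e2 k) (uniq4 k) q]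
  have t2 : coeff (mu k) (aeval tbl2 (q * X vb ^ (2+k))) = 0 := by
    rw [map_mul, h2, coeff_mul_monomial',
      if_neg (by rw [Finsupp.single_le_iff, mu_app0]; omega)]
  rw [Lf, t0, t1, t2]
  ring

lemma Lf_C (k : ℕ) (q : MvPolynomial V ℤ) :
    Lf k (q * X vc ^ (2+k)) = 2 * coeff (e3 k) q := by
  have h0 : aeval tbl0 (X vc ^ (2+k) : MvPolynomial V ℤ)
      = monomial (Finsupp.single 2 (2*(2+k))) (1:ℤ) := by
    rw [map_pow, aeval_X, tbl0_vc, ← pow_mul, X_pow_eq_monomial]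
  have h1 : aeval tbl1 (X vc ^ (2+k) : MvPolynomial V ℤ)
      = monomial (Finsupp.single 0 (2*(2+k))) (1:ℤ) := by
    rw [map_pow, aeval_X, tbl1_vc, ← pow_mul, X_pow_eq_monomial]
  have h2 : aeval tbl2 (X vc ^ (2+k) : MvPolynomial V ℤ)
      = monomial (Finsupp.single 1 (2*(2+k))) (1:ℤ) := by
    rw [map_pow, aeval_X, tbl2_vc, ← pow_mul, X_pow_eq_monomial]
  have t0 : coeff (mu k) (aeval tbl0 (q * X vc ^ (2+k))) = coeff (e3 k) q := by
    rw [map_mul, h0, coeff_mul_monomial',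
      if_pos (by rw [Finsupp.single_le_iff, mu_app2]; omega), mul_one]
    have hd : mu k - Finsupp.single 2 (2*(2+k)) = nuC k := by
      ext j
      fin_cases j <;>
        (simp [mu, nuC, sx, Finsupp.tsub_apply, Finsupp.single_apply]; try omega)
    rw [hd, show tbl0 = (fun i => monomial (tau0 i) (1:ℤ)) from rfl,
      coeff_aeval_eq tau0 (nuC k) (e3 k) (uniq5 k) q]
  have t1 : coeff (mu k) (aeval tbl1 (q * X vc ^ (2+k))) = 0 := by
    rw [map_mul, h1, coeff_mul_monomial',
      if_neg (by rw [Finsupp.single_le_iff, mu_app0]; omega)]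
  have t2 : coeff (mu k) (aeval tbl2 (q * X vc ^ (2+k))) = coeff (e3 k) q := by
    rw [map_mul, h2, coeff_mul_monomial',
      if_pos (by rw [Finsupp.single_le_iff, mu_app1]; omega), mul_one]
    have hd : mu k - Finsupp.single 1 (2*(2+k)) = nuB k := by
      ext j
      fin_cases j <;>
        (simp [mu, nuB, sx, Finsupp.tsub_apply, Finsupp.single_apply]; try omega)
    rw [hd, show tbl2 = (fun i => monomial (tau2 i) (1:ℤ)) from rfl,
      coeff_aeval_eq tau2 (nuB k) (e3 k) (uniq6 k) q]
  rw [Lf, t0, t1, t2]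
  ring

lemma Lf_G0 (k : ℕ) : Lf k (G0 * m1 ^ k) = -9 := by
  rw [Lf, map_mul, map_pow, psi0_G0, psi0_m1,
    map_mul, map_pow, psi1_G0, psi1_m1,
    map_mul, map_pow, psi2_G0, psi2_m1,
    coeff_helper]
  norm_num

end Stmt16Aux

/-- With `X` the generic symmetric `3 × 3` matrix and
`g = x₁₁x₂₂x₃₃ − x₁₁x₂₃² − x₂₂x₁₃² − x₃₃x₁₂²`: for every `G` with `2·G = Λ₂(g) − g²`
(`Λ₂` the squaring Frobenius lift) and every `k`, the element `G·(x₁₁x₂₂x₃₃)^k` is not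
in the ideal `(2, det X, x₁₁^{2+k}, x₂₂^{2+k}, x₃₃^{2+k})`. -/
theorem stmt_16 (g : MvPolynomial {q : Fin 3 × Fin 3 // q.1 ≤ q.2} ℤ)
    (hg : g = sv 0 0 (by decide) * sv 1 1 (by decide) * sv 2 2 (by decide)
      - sv 0 0 (by decide) * sv 1 2 (by decide) ^ 2
      - sv 1 1 (by decide) * sv 0 2 (by decide) ^ 2
      - sv 2 2 (by decide) * sv 0 1 (by decide) ^ 2)
    (G : MvPolynomial {q : Fin 3 × Fin 3 // q.1 ≤ q.2} ℤ)
    (hG : (2 : MvPolynomial {q : Fin 3 × Fin 3 // q.1 ≤ q.2} ℤ) * G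
      = aeval (fun q : {q : Fin 3 × Fin 3 // q.1 ≤ q.2} => X q ^ 2) g - g ^ 2)
    (k : ℕ) :
    G * (sv 0 0 (by decide) * sv 1 1 (by decide) * sv 2 2 (by decide)) ^ k ∉
      Ideal.span {(2 : MvPolynomial {q : Fin 3 × Fin 3 // q.1 ≤ q.2} ℤ), (symMat 3).det,
        sv 0 0 (by decide) ^ (2 + k), sv 1 1 (by decide) ^ (2 + k),
        sv 2 2 (by decide) ^ (2 + k)} := by
  intro hmem
  have hGG : G = G0 := by
    have h2ne : (2 : MvPolynomial V ℤ) ≠ 0 := by norm_num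
    apply mul_left_cancel₀ h2ne
    rw [hG, G0_spec g hg]
  rcases Ideal.mem_span_insert.mp hmem with ⟨q1, z1, hz1, hx1⟩
  rcases Ideal.mem_span_insert.mp hz1 with ⟨q2, z2, hz2, hx2⟩
  rcases Ideal.mem_span_insert.mp hz2 with ⟨q3, z3, hz3, hx3⟩
  rcases Ideal.mem_span_insert.mp hz3 with ⟨q4, z4, hz4, hx4⟩
  rcases Ideal.mem_span_singleton'.mp hz4 with ⟨q5, hx5⟩
  have hx1' : G0 * m1 ^ k = q1 * 2 + z1 := by rw [← hGG]; exact hx1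
  have hx3' : z2 = q3 * X va ^ (2+k) + z3 := hx3
  have hx4' : z3 = q4 * X vb ^ (2+k) + z4 := hx4
  have hx5' : q5 * X vc ^ (2+k) = z4 := hx5
  have chain : (-9 : ℤ) = 2 * Lf k q1 + (0 + (2 * coeff (e1 k) q3
      + (2 * coeff (e2 k) q4 + 2 * coeff (e3 k) q5))) := by
    calc (-9 : ℤ) = Lf k (G0 * m1 ^ k) := (Lf_G0 k).symm
    _ = Lf k (q1 * 2) + Lf k z1 := by rw [hx1', Lf_add]
    _ = 2 * Lf k q1 + (Lf k (q2 * (symMat 3).det) + Lf k z2) := by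
        rw [Lf_two, hx2, Lf_add]
    _ = 2 * Lf k q1 + (0 + (Lf k (q3 * X va ^ (2+k)) + Lf k z3)) := by
        rw [Lf_det, hx3', Lf_add]
    _ = 2 * Lf k q1 + (0 + (2 * coeff (e1 k) q3
        + (Lf k (q4 * X vb ^ (2+k)) + Lf k z4))) := by
        rw [Lf_A, hx4', Lf_add]
    _ = 2 * Lf k q1 + (0 + (2 * coeff (e1 k) q3
        + (2 * coeff (e2 k) q4 + Lf k (q5 * X vc ^ (2+k))))) := by
        rw [Lf_B, ← hx5']
    _ = 2 * Lf k q1 + (0 + (2 * coeff (e1 k) q3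
        + (2 * coeff (e2 k) q4 + 2 * coeff (e3 k) q5))) := by
        rw [Lf_C]
  omega
end
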